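/- arXiv:1610.09130 — 5 statements merged into one kernel-verified Lean document; each statement's English description precedes it below -/
import Mathlib

section
/- Let q ≥ 1 and let i, j be integers with 1 ≤ i, j ≤ 2^q. If the string id(i) pointwise dominates id(j), i.e. for every position p with 1 ≤ p ≤ 4q+2, id(j)(p) = 1 implies id(i)(p) = 1, then i = j. -/
/-!
The block `nb(i)` of `id(i)` lists the bits of `i` and the block after it their complements, so
domination makes every 1-bit of `j` a 1-bit of `i` and every 0-bit of `j` a 0-bit of `i`.
Hence `i ≡ j [MOD 2^q]`, and two numbers in `[1, 2^q]` congruent modulo `2^q` are equal.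
-/

/-- The `q`-bit binary representation of `i` (bit `p` is `i.testBit p`);
this is an injective `q`-bit encoding of the range `1 ≤ i ≤ 2^q`
(with `nb(2^q) = 0⋯0`). -/
def nbStr (q i : ℕ) : List Bool := (List.range q).map i.testBit

/-- `id(i) = 1 · nb(i) · (nb(i))̄ · ((nb(i))̄)^R · (nb(i))^R · 1`, a string of length `4q+2`. -/
def idStr (q i : ℕ) : List Bool :=
  [true] ++ nbStr q i ++ (nbStr q i).map (! ·) ++ ((nbStr q i).map (! ·)).reverse
    ++ (nbStr q i).reverse ++ [true]

theorem Nat.ModEq.eq_of_one_le_of_le {m a b : ℕ} (h : a ≡ b [MOD m]) (ha₁ : 1 ≤ a)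
    (ha : a ≤ m) (hb₁ : 1 ≤ b) (hb : b ≤ m) : a = b :=
  h.eq_of_abs_lt <| abs_sub_lt_iff.2 ⟨by omega, by omega⟩

theorem Nat.modEq_two_pow_of_testBit_eq {q a b : ℕ} (h : ∀ k < q, a.testBit k = b.testBit k) :
    a ≡ b [MOD 2 ^ q] :=
  Nat.eq_of_testBit_eq fun k => by
    simp only [Nat.testBit_mod_two_pow]
    by_cases hk : k < q
    · simp [hk, h k hk]
    · simp [hk]

section
variable {q k : ℕ} (i : ℕ)

@[simp] lemma length_nbStr : (nbStr q i).length = q := by simp [nbStr]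

lemma idStr_getD_bit (hk : k < q) : (idStr q i).getD (k + 1) false = i.testBit k := by
  simp only [idStr, List.append_assoc, List.singleton_append]
  rw [List.getD_append _ _ _ _ (by simpa)]
  simp [nbStr, hk]

lemma idStr_getD_not_bit (hk : k < q) :
    (idStr q i).getD (q + k + 1) false = !i.testBit k := by
  simp only [idStr, List.append_assoc, List.singleton_append]
  rw [List.getD_append_right _ _ _ _ (by simp), List.getD_append _ _ _ _ (by simpa)]
  simp [nbStr, hk]

end

lemma testBit_eq_of_idStr_dominates {q i j : ℕ}
    (hdom : ∀ p, (idStr q j).getD p false = true → (idStr q i).getD p false = true)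
    {k : ℕ} (hk : k < q) : i.testBit k = j.testBit k := by
  have hbit := hdom (k + 1)
  have hnot := hdom (q + k + 1)
  rw [idStr_getD_bit _ hk, idStr_getD_bit _ hk] at hbit
  rw [idStr_getD_not_bit _ hk, idStr_getD_not_bit _ hk] at hnot
  revert hbit hnot
  cases i.testBit k <;> cases j.testBit k <;> simp

theorem idStr_dominates_inj_general (q i j : ℕ)
    (hi1 : 1 ≤ i) (hi2 : i ≤ 2 ^ q) (hj1 : 1 ≤ j) (hj2 : j ≤ 2 ^ q)
    (hdom : ∀ p, (idStr q j).getD p false = true → (idStr q i).getD p false = true) :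
    i = j :=
  (Nat.modEq_two_pow_of_testBit_eq fun _ hk => testBit_eq_of_idStr_dominates hdom hk)
    |>.eq_of_one_le_of_le hi1 hi2 hj1 hj2

/-- If `id(i)` pointwise dominates `id(j)` (wherever `id(j)` has a `1`, so does `id(i)`),
then `i = j`. -/
theorem idStr_dominates_inj (q i j : ℕ) (hq : 1 ≤ q)
    (hi1 : 1 ≤ i) (hi2 : i ≤ 2 ^ q) (hj1 : 1 ≤ j) (hj2 : j ≤ 2 ^ q)
    (hdom : ∀ p, (idStr q j).getD p false = true → (idStr q i).getD p false = true) :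
    i = j :=
  idStr_dominates_inj_general q i j hi1 hi2 hj1 hj2 hdom
end

section
/- Let φ be a 3-CNF formula with variables x_1,…,x_n and clauses C_{n+1},…,C_{n+m}, each clause consisting of exactly three literals. Let q = ⌈log₂(n+m)⌉ and r = 4q+2, and let id(i) for 1 ≤ i ≤ n+m be as defined. For each variable i, let c_i (resp. d_i) be the number of clauses containing the literal x_i (resp. ¬x_i), counted with multiplicity, and f_i = c_i + d_i. Fix, for each i, a string a^{x_i} that is the concatenation (in any fixed order) of id(j) over all clauses C_j containing literal x_i, followed by d_i copies of 1 · 0^{r−2} · 1, and similarly a^{¬x_i} the concatenation of id(j) over clauses containing ¬x_i followed by c_i copies of 1 · 0^{r−2} · 1. Let b^i = id(i) · a^{x_i} · id(i) · a^{¬x_i} · id(i) and s = b^1 · b^2 ⋯ b^n. Let the collection of strings consist of: for each variable i the string id(i) · 0^{r·f_i} · id(i); for each clause C_j the string id(j); and n+2m copies of the filler string 1 · 0^{r−2} · 1. Then φ is satisfiable if and only if this String Crafting instance (s together with the collection of strings) has a solution. -/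
/-- The filler string `1 · 0^{r-2} · 1`. -/
def fillerStr (r : ℕ) : List Bool := [true] ++ List.replicate (r - 2) false ++ [true]

/-- A solution of the String Crafting instance `(s; t_1,…,t_N)`: a reordering `u` of the
collection `ts` such that wherever the concatenation of `u` has a `1`, `s` has a `1`. -/
def SCSol (s : List Bool) (ts : List (List Bool)) : Prop :=
  ∃ u : List (List Bool), u.Perm ts ∧
    ∀ p : ℕ, u.flatten.getD p false = true → s.getD p false = true

/-!
Every string of the instance is a concatenation of blocks of length `r = 4q + 2`: the codes
`id(k)`, the filler `1 · 0^{r-2} · 1`, and `0^r`. A code contains both `nb(k)` and its complement,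
so it fits under a block of `s` only if that block is the same code, whereas the filler fits under
every code. Since the strings to be placed are themselves block words, a solution is a rearrangement
of block words whose concatenation fits under the block word of `s` block by block.

Given a satisfying assignment, the string `id(i) · 0^{r f_i} · id(i)` is placed on the half
`id(i) · a^ℓ · id(i)` of `b^i` whose literal `ℓ` is false, each clause string on an occurrence of
`id(j)` in the half of a true literal of `C_j`, and fillers everywhere else. Conversely, the string
of `x_i` can only lie on one of the two halves of `b^i`; declare the literal of that half false.
A clause string has to lie on a block `id(j)` inside the half of a literal of `C_j`, and that half
is then not the one taken by the variable string, so the literal is true.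
-/

namespace StringCrafting

open List

section ListLemmas

variable {α β : Type*}

theorem exists_perm_map_eq {f : α → β} {u : List β} {l : List α} (h : u.Perm (l.map f)) :
    ∃ l' : List α, l'.Perm l ∧ l'.map f = u := by
  generalize hv : l.map f = v at h
  induction h generalizing l with
  | nil => exact ⟨[], by simp_all⟩
  | cons x _ ih =>
    obtain ⟨a, l, rfl, rfl, rfl⟩ := map_eq_cons_iff.1 hv
    obtain ⟨l', hl', rfl⟩ := ih rfl
    exact ⟨a :: l', hl'.cons a, rfl⟩
  | swap x y v =>
    obtain ⟨a, l, rfl, rfl, h⟩ := map_eq_cons_iff.1 hv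
    obtain ⟨b, l, rfl, rfl, rfl⟩ := map_eq_cons_iff.1 h
    exact ⟨b :: a :: l, Perm.swap a b l, rfl⟩
  | trans _ _ ih₁ ih₂ =>
    obtain ⟨l'', hl'', rfl⟩ := ih₂ hv
    obtain ⟨l', hl', rfl⟩ := ih₁ rfl
    exact ⟨l', hl'.trans hl'', rfl⟩

theorem getElem?_flatten_length_take_add (L : List (List α)) {k c : ℕ} (hk : k < L.length)
    (hc : c < L[k].length) : L.flatten[(L.take k).flatten.length + c]? = L[k][c]? := by
  have hL : L.flatten = (L.take k).flatten ++ (L[k] ++ (L.drop (k + 1)).flatten) := by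
    rw [← flatten_cons, ← drop_eq_getElem_cons hk, ← flatten_append, take_append_drop]
  rw [hL, getElem?_append_right (by omega), Nat.add_sub_cancel_left, getElem?_append_left hc]

theorem exists_of_getElem?_flatten {L : List (List α)} {p : ℕ} {x : α}
    (h : L.flatten[p]? = some x) :
    ∃ k, ∃ hk : k < L.length, ∃ c, p = (L.take k).flatten.length + c ∧ L[k][c]? = some x := by
  induction L generalizing p with
  | nil => simp at h
  | cons l L ih =>
    rw [flatten_cons] at h
    rcases lt_or_ge p l.length with hp | hp
    · exact ⟨0, by simp, p, by simp, by rwa [getElem?_append_left hp] at h⟩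
    · rw [getElem?_append_right hp] at h
      obtain ⟨k, hk, c, hpc, hc⟩ := ih h
      refine ⟨k + 1, by simpa using hk, c, ?_, hc⟩
      simp only [take_succ_cons, flatten_cons, length_append]
      omega

theorem length_flatten_take_add_le (L : List (List α)) {k k' : ℕ} (hkk : k < k')
    (hk' : k' ≤ L.length) :
    (L.take k).flatten.length + (L[k]'(by omega)).length ≤ (L.take k').flatten.length := by
  obtain ⟨d, rfl⟩ := Nat.exists_eq_add_of_le hkk
  rw [take_add, take_succ_eq_append_getElem (by omega)]
  simp only [flatten_append, length_append, flatten_cons, flatten_nil, append_nil]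
  omega

theorem getElem?_anchored {a x : α} {X Y : List α} {c : ℕ}
    (h : ([a] ++ X ++ [a] ++ Y ++ [a])[c]? = some x) :
    (x = a ∧ (c = 0 ∨ c = X.length + 1 ∨ c = X.length + Y.length + 2)) ∨
      (0 < c ∧ c ≤ X.length ∧ x ∈ X) ∨
      (X.length + 1 < c ∧ c ≤ X.length + Y.length + 1 ∧ x ∈ Y) := by
  simp only [getElem?_append, length_append, length_singleton, getElem?_singleton] at h
  split_ifs at h
  all_goals first
    | exact .inl ⟨(Option.some.inj h).symm, by omega⟩
    | exact .inr (.inl ⟨by omega, by omega, mem_of_getElem? h⟩)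
    | exact .inr (.inr ⟨by omega, by omega, mem_of_getElem? h⟩)

theorem forall₂_replicate {R : α → β → Prop} {x : α} {y : β} (h : R x y) (k : ℕ) :
    Forall₂ R (replicate k x) (replicate k y) := by
  induction k with
  | zero => exact .nil
  | succ k ih => exact .cons h ih

theorem forall₂_replicate_length {R : α → β → Prop} {x : α} {l : List β}
    (h : ∀ y ∈ l, R x y) : Forall₂ R (replicate l.length x) l := by
  induction l with
  | nil => exact .nil
  | cons y l ih => exact .cons (h y mem_cons_self) (ih fun y hy => h y (mem_cons_of_mem _ hy))

theorem coe_flatten_map (l : List β) (g : β → List α) :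
    (((l.map g).flatten : List α) : Multiset α) = (l.map fun i => (g i : Multiset α)).sum := by
  induction l with
  | nil => simp
  | cons i l ih => simp [← ih, Multiset.coe_add]

theorem coe_flatten_map_finRange {k : ℕ} (g : Fin k → List α) :
    ((((finRange k).map g).flatten : List α) : Multiset α) = ∑ j, (g j : Multiset α) := by
  rw [coe_flatten_map, Fin.sum_univ_def]

theorem coe_map_finRange {k : ℕ} (f : Fin k → α) :
    (((finRange k).map f : List α) : Multiset α) = ∑ j, {f j} := by
  rw [Fin.sum_univ_def]
  induction finRange k with
  | nil => rfl
  | cons j l ih =>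
    rw [map_cons, map_cons, sum_cons, ← ih, ← Multiset.cons_coe, Multiset.singleton_add]

end ListLemmas

theorem eq_of_mod_eq {N k k' : ℕ} (h : k % N = k' % N) (hk : 0 < k) (hkN : k ≤ N)
    (hk' : 0 < k') (hk'N : k' ≤ N) : k = k' :=
  Nat.ModEq.eq_of_abs_lt h (by rw [abs_lt]; constructor <;> omega)

def Fits (t s : List Bool) : Prop := ∀ p, t.getD p false = true → s.getD p false = true

theorem fits_iff {t s : List Bool} :
    Fits t s ↔ ∀ p : ℕ, t[p]? = some true → s[p]? = some true := by
  have key (x : Option Bool) : x.getD false = true ↔ x = some true := by cases x <;> simp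
  simp only [Fits, getD_eq_getElem?_getD, key]

theorem fits_append_iff {t₁ t₂ s : List Bool} :
    Fits (t₁ ++ t₂) s ↔ Fits t₁ s ∧ Fits t₂ (s.drop t₁.length) := by
  simp only [fits_iff, getElem?_drop]
  constructor
  · intro h
    refine ⟨fun p hp => h p ?_, fun p hp => h _ ?_⟩
    · rwa [getElem?_append_left (List.getElem?_eq_some_iff.1 hp).1]
    · rwa [getElem?_append_right (by omega), Nat.add_sub_cancel_left]
  · rintro ⟨h₁, h₂⟩ p hp
    rcases lt_or_ge p t₁.length with hp' | hp'
    · exact h₁ p (by rwa [getElem?_append_left hp'] at hp)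
    · rw [getElem?_append_right hp'] at hp
      simpa [hp'] using h₂ _ hp

theorem Fits.append_right {t s : List Bool} (h : Fits t s) (s' : List Bool) :
    Fits t (s ++ s') := by
  rw [fits_iff] at *
  intro p hp
  rw [getElem?_append_left (List.getElem?_eq_some_iff.1 (h p hp)).1]
  exact h p hp

theorem Fits.append {t₁ t₂ s₁ s₂ : List Bool} (h₁ : Fits t₁ s₁) (h₂ : Fits t₂ s₂)
    (hl : t₁.length = s₁.length) : Fits (t₁ ++ t₂) (s₁ ++ s₂) :=
  fits_append_iff.2 ⟨h₁.append_right s₂, by rwa [hl, drop_left]⟩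

theorem Fits.of_append_of_length_le {t s₁ s₂ : List Bool} (h : Fits t (s₁ ++ s₂))
    (hl : t.length ≤ s₁.length) : Fits t s₁ := by
  rw [fits_iff] at *
  intro p hp
  have hp' := (List.getElem?_eq_some_iff.1 hp).1.trans_le hl
  simpa [getElem?_append_left hp'] using h p hp

theorem Fits.getElem?_zero {t s : List Bool} (h : Fits t s) (ht : t[0]? = some true) :
    s[0]? = some true :=
  fits_iff.1 h 0 ht

@[simp] theorem length_nbStr (q k : ℕ) : (nbStr q k).length = q := by
  simp [nbStr]

@[simp] theorem length_idStr (q k : ℕ) : (idStr q k).length = 4 * q + 2 := by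
  simp [idStr]
  omega

@[simp] theorem length_fillerStr (q : ℕ) : (fillerStr (4 * q + 2)).length = 4 * q + 2 := by
  simp [fillerStr]

theorem idStr_getElem?_zero (q k : ℕ) : (idStr q k)[0]? = some true := by
  simp [idStr]

theorem idStr_getElem?_last (q k : ℕ) : (idStr q k)[4 * q + 1]? = some true := by
  rw [idStr, getElem?_append_right (by simp; omega)]
  simp only [length_append, length_singleton, length_nbStr, length_map, length_reverse]
  rw [show 4 * q + 1 - (1 + q + q + q + q) = 0 by omega]
  rfl

theorem idStr_getElem?_bit {q k p : ℕ} (hp : p < q) :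
    (idStr q k)[1 + p]? = some (k.testBit p) := by
  rw [idStr, getElem?_append_left (by simp; omega), getElem?_append_left (by simp; omega),
    getElem?_append_left (by simp; omega), getElem?_append_left (by simp; omega),
    getElem?_append_right (by simp)]
  simp [nbStr, hp]

theorem idStr_getElem?_compl_bit {q k p : ℕ} (hp : p < q) :
    (idStr q k)[1 + q + p]? = some (!k.testBit p) := by
  rw [idStr, getElem?_append_left (by simp; omega), getElem?_append_left (by simp; omega),
    getElem?_append_left (by simp; omega), getElem?_append_right (by simp; omega)]
  simp [nbStr, show 1 + q + p - (q + 1) = p by omega, hp]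

theorem fillerStr_getElem?_last (q : ℕ) : (fillerStr (4 * q + 2))[4 * q + 1]? = some true := by
  rw [fillerStr, getElem?_append_right (by simp)]
  simp

theorem eq_of_fillerStr_getElem? {q p : ℕ} (h : (fillerStr (4 * q + 2))[p]? = some true) :
    p = 0 ∨ p = 4 * q + 1 := by
  simp only [fillerStr, getElem?_append, length_append, length_singleton, length_replicate,
    getElem?_replicate, getElem?_singleton] at h
  split_ifs at h <;> simp_all
  omega

theorem mod_two_pow_eq_of_fits_idStr {q k k' : ℕ} (h : Fits (idStr q k) (idStr q k')) :
    k % 2 ^ q = k' % 2 ^ q := by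
  rw [fits_iff] at h
  refine Nat.eq_of_testBit_eq fun p => ?_
  simp only [Nat.testBit_mod_two_pow]
  by_cases hp : p < q
  · have h₁ := h (1 + p)
    have h₂ := h (1 + q + p)
    simp only [idStr_getElem?_bit hp, idStr_getElem?_compl_bit hp, Option.some.injEq] at h₁ h₂
    revert h₁ h₂
    cases k.testBit p <;> cases k'.testBit p <;> simp
  · simp [hp]

theorem not_fits_idStr_fillerStr {q : ℕ} (hq : 0 < q) (k : ℕ) :
    ¬ Fits (idStr q k) (fillerStr (4 * q + 2)) := by
  intro h
  rw [fits_iff] at h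
  cases hk : k.testBit 0
  · have := eq_of_fillerStr_getElem? (h _ (by rw [idStr_getElem?_compl_bit hq, hk]; rfl))
    omega
  · have := eq_of_fillerStr_getElem? (h _ (by rw [idStr_getElem?_bit hq, hk]))
    omega

theorem fillerStr_fits {q : ℕ} {s : List Bool} (h₀ : s[0]? = some true)
    (h₁ : s[4 * q + 1]? = some true) : Fits (fillerStr (4 * q + 2)) s := by
  rw [fits_iff]
  intro p hp
  rcases eq_of_fillerStr_getElem? hp with rfl | rfl <;> assumption

inductive Block (n m : ℕ)
  | var (i : Fin n)
  | clause (j : Fin m)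
  | filler
  | blank

namespace Block

variable {n m : ℕ}

def render (q : ℕ) : Block n m → List Bool
  | var i => idStr q (i + 1)
  | clause j => idStr q (n + 1 + j)
  | filler => fillerStr (4 * q + 2)
  | blank => replicate (4 * q + 2) false

@[simp] theorem length_render (q : ℕ) (x : Block n m) : (x.render q).length = 4 * q + 2 := by
  cases x <;> simp [render]

theorem render_getElem?_zero (q : ℕ) {x : Block n m} (hx : x ≠ blank) :
    (x.render q)[0]? = some true := by
  cases x
  case blank => exact absurd rfl hx
  all_goals first | exact idStr_getElem?_zero _ _ | rfl

theorem render_getElem?_last (q : ℕ) {x : Block n m} (hx : x ≠ blank) :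
    (x.render q)[4 * q + 1]? = some true := by
  cases x
  case blank => exact absurd rfl hx
  all_goals first | exact idStr_getElem?_last _ _ | exact fillerStr_getElem?_last q

inductive Covers : Block n m → Block n m → Prop
  | refl (x : Block n m) : Covers x x
  | blank (y : Block n m) : Covers blank y
  | filler {y : Block n m} : y ≠ blank → Covers filler y

theorem Covers.fits_render (q : ℕ) {x y : Block n m} (h : x.Covers y) :
    Fits (x.render q) (y.render q) := by
  cases h with
  | refl => exact fun _ h => h
  | blank =>
    intro p hp
    simp [render] at hp
  | filler hy => exact fillerStr_fits (render_getElem?_zero q hy) (render_getElem?_last q hy)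

theorem eq_of_fits_render {q : ℕ} (hq : 0 < q) (hnm : n + m ≤ 2 ^ q) {x y : Block n m}
    (hx : x ≠ filler) (hx' : x ≠ blank) (h : Fits (x.render q) (y.render q)) : y = x := by
  have hy : y ≠ blank := by
    rintro rfl
    simpa [render] using h.getElem?_zero (render_getElem?_zero q hx')
  cases x with
  | filler => exact absurd rfl hx
  | blank => exact absurd rfl hx'
  | _ =>
    cases y with
    | filler => exact absurd h (not_fits_idStr_fillerStr hq _)
    | blank => exact absurd rfl hy
    | _ =>
      have := eq_of_mod_eq (mod_two_pow_eq_of_fits_idStr h) (by omega) (by omega) (by omega)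
        (by omega)
      simp only [var.injEq, clause.injEq, reduceCtorEq, Fin.ext_iff]
      omega

end Block

variable {n m : ℕ}

def encode (q : ℕ) (w : List (Block n m)) : List Bool := (w.map (Block.render q)).flatten

@[simp] theorem encode_nil (q : ℕ) : encode q ([] : List (Block n m)) = [] := rfl

@[simp] theorem encode_cons (q : ℕ) (x : Block n m) (w : List (Block n m)) :
    encode q (x :: w) = x.render q ++ encode q w := rfl

@[simp] theorem encode_append (q : ℕ) (w w' : List (Block n m)) :
    encode q (w ++ w') = encode q w ++ encode q w' := by
  simp [encode]

@[simp] theorem encode_replicate (q k : ℕ) (x : Block n m) :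
    encode q (replicate k x) = (replicate k (x.render q)).flatten := by
  simp [encode]

theorem encode_flatten (q : ℕ) (L : List (List (Block n m))) :
    encode q L.flatten = (L.map (encode q)).flatten := by
  induction L with
  | nil => rfl
  | cons w L ih => simp [ih]

theorem fits_encode_of_forall₂ (q : ℕ) {W L : List (Block n m)} (h : Forall₂ Block.Covers W L) :
    Fits (encode q W) (encode q L) := by
  induction h with
  | nil => exact fun _ h => h
  | cons hxy _ ih => exact (hxy.fits_render q).append ih (by simp)

theorem getElem?_eq_of_fits_encode {q : ℕ} (hq : 0 < q) (hnm : n + m ≤ 2 ^ q) {x : Block n m}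
    (hx : x ≠ .filler) (hx' : x ≠ .blank) {W L : List (Block n m)} {p : ℕ}
    (h : Fits (encode q W) (encode q L)) (hW : W[p]? = some x) : L[p]? = some x := by
  induction p generalizing W L with
  | zero =>
    obtain ⟨W, rfl⟩ : ∃ W', W = x :: W' := by cases W <;> simp_all
    have h₁ := (fits_append_iff.1 (encode_cons q x W ▸ h)).1
    cases L with
    | nil => simpa using h₁.getElem?_zero (Block.render_getElem?_zero q hx')
    | cons y L =>
      simp [Block.eq_of_fits_render hq hnm hx hx' (h₁.of_append_of_length_le (by simp))]
  | succ p ih =>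
    cases W with
    | nil => simp at hW
    | cons w W =>
      have h₂ := (fits_append_iff.1 (encode_cons q w W ▸ h)).2
      cases L with
      | nil => simpa using ih (L := []) (by simpa using h₂) hW
      | cons y L => simpa using ih (by simpa using h₂) hW

section Reduction

variable (clauses : Fin m → (Fin n × Bool) × (Fin n × Bool) × (Fin n × Bool))

def lits (j : Fin m) : List (Fin n × Bool) := [(clauses j).1, (clauses j).2.1, (clauses j).2.2]

def litCount (i : Fin n) (pos : Bool) : ℕ := ∑ j, (lits clauses j).count (i, pos)

def occ (i : Fin n) : ℕ := litCount clauses i true + litCount clauses i false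

def region (i : Fin n) (pos : Bool) : List (Block n m) :=
  ((finRange m).map fun j => replicate ((lits clauses j).count (i, pos)) (.clause j)).flatten
    ++ replicate (litCount clauses i !pos) .filler

def segment (i : Fin n) : List (Block n m) :=
  [.var i] ++ region clauses i true ++ [.var i] ++ region clauses i false ++ [.var i]

def layout : List (Block n m) := ((finRange n).map (segment clauses)).flatten

def varPiece (i : Fin n) : List (Block n m) :=
  [.var i] ++ replicate (occ clauses i) .blank ++ [.var i]

def pieces : List (List (Block n m)) :=
  (finRange n).map (varPiece clauses) ++ (finRange m).map (fun j => [.clause j])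
    ++ replicate (n + 2 * m) [.filler]

theorem exists_mem_lits_iff (a : Fin n → Bool) (j : Fin m) :
    (∃ l ∈ lits clauses j, a l.1 = l.2) ↔
      a (clauses j).1.1 = (clauses j).1.2 ∨ a (clauses j).2.1.1 = (clauses j).2.1.2 ∨
        a (clauses j).2.2.1 = (clauses j).2.2.2 := by
  simp [lits]

theorem length_region (i : Fin n) (pos : Bool) :
    (region clauses i pos).length = occ clauses i := by
  cases pos <;> simp [region, occ, litCount, length_flatten, Fin.sum_univ_def, Function.comp_def]
  omega

theorem sum_occ : ∑ i, occ clauses i = 3 * m := by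
  have hcount (l : List (Fin n × Bool)) : ∑ x, l.count x = l.length := by
    induction l with
    | nil => simp
    | cons a l ih => simp [count_cons, Finset.sum_add_distrib, ih]
  calc ∑ i, occ clauses i = ∑ x : Fin n × Bool, ∑ j, (lits clauses j).count x := by
        simp [occ, litCount, Fintype.sum_prod_type]
    _ = ∑ j, ∑ x, (lits clauses j).count x := Finset.sum_comm
    _ = 3 * m := by simp [hcount, lits, mul_comm]

theorem encode_region (q : ℕ) (i : Fin n) (pos : Bool) :
    encode q (region clauses i pos) =
      ((finRange m).map fun j =>
        (replicate ((lits clauses j).count (i, pos)) (idStr q (n + 1 + j.val))).flatten).flatten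
      ++ (replicate (litCount clauses i !pos) (fillerStr (4 * q + 2))).flatten := by
  simp [region, encode_flatten, Function.comp_def, Block.render]

theorem encode_layout (q : ℕ) :
    encode q (layout clauses) = ((finRange n).map fun i =>
      idStr q (i.val + 1) ++ encode q (region clauses i true) ++ idStr q (i.val + 1)
        ++ encode q (region clauses i false) ++ idStr q (i.val + 1)).flatten := by
  simp [layout, segment, encode_flatten, Function.comp_def, Block.render]

theorem map_encode_pieces (q : ℕ) :
    (pieces clauses).map (encode q) =
      (finRange n).map (fun i =>
        idStr q (i.val + 1) ++ replicate ((4 * q + 2) * occ clauses i) false ++ idStr q (i.val + 1))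
      ++ (finRange m).map (fun j => idStr q (n + 1 + j.val))
      ++ replicate (n + 2 * m) (fillerStr (4 * q + 2)) := by
  simp [pieces, varPiece, encode, Block.render, Function.comp_def, flatten_replicate_replicate,
    mul_comm]

end Reduction

section Forward

variable (clauses : Fin m → (Fin n × Bool) × (Fin n × Bool) × (Fin n × Bool))
  (a : Fin n → Bool) (w : Fin m → Fin n × Bool)

/-- Laid over `region clauses i pos` when the literal `(i, pos)` is true: a clause `j` whose chosen
true literal `w j` is `(i, pos)` puts its code on its first occurrence, fillers go everywhere else. -/
def cover (i : Fin n) (pos : Bool) : List (Block n m) :=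
  ((finRange m).map fun j =>
    if w j = (i, pos) then .clause j :: replicate ((lits clauses j).count (i, pos) - 1) .filler
    else replicate ((lits clauses j).count (i, pos)) .filler).flatten
  ++ replicate (litCount clauses i !pos) .filler

def segmentPieces (i : Fin n) : List (List (Block n m)) :=
  if a i then [.filler] :: (cover clauses w i true).map (fun x => [x]) ++ [varPiece clauses i]
  else varPiece clauses i :: (cover clauses w i false).map (fun x => [x]) ++ [[.filler]]

def solution : List (List (Block n m)) :=
  ((finRange n).map (segmentPieces clauses a w)).flatten

variable {clauses a w}

theorem forall₂_cover (hw : ∀ j, w j ∈ lits clauses j) (i : Fin n) (pos : Bool) :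
    Forall₂ Block.Covers (cover clauses w i pos) (region clauses i pos) := by
  refine rel_append (rel_flatten ?_) (forall₂_replicate (.refl _) _)
  refine forall₂_map_left_iff.2 (forall₂_map_right_iff.2 (forall₂_same.2 fun j _ => ?_))
  split_ifs with hj
  · obtain ⟨k, hk⟩ := Nat.exists_eq_add_one_of_ne_zero (count_pos_iff.2 (hj ▸ hw j)).ne'
    rw [hk, replicate_succ, Nat.add_sub_cancel]
    exact .cons (.refl _) (forall₂_replicate (.filler (by simp)) _)
  · exact forall₂_replicate (.filler (by simp)) _

theorem forall₂_flatten_segmentPieces (hw : ∀ j, w j ∈ lits clauses j) (i : Fin n) :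
    Forall₂ Block.Covers (segmentPieces clauses a w i).flatten (segment clauses i) := by
  have hblank (pos : Bool) :
      Forall₂ Block.Covers (replicate (occ clauses i) .blank) (region clauses i pos) := by
    simpa [length_region] using forall₂_replicate_length (x := Block.blank)
      (l := region clauses i pos) fun y _ => .blank y
  have hvar : Forall₂ Block.Covers [(.var i : Block n m)] [.var i] := .cons (.refl _) .nil
  have hfill : Forall₂ Block.Covers [(.filler : Block n m)] [.var i] :=
    .cons (.filler (by simp)) .nil
  rw [segmentPieces]
  split <;> simp only [flatten_cons, flatten_append, segment, varPiece, flatten_nil, append_nil,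
      append_assoc, ← flatMap_def, flatMap_singleton']
  · exact rel_append hfill (rel_append (forall₂_cover hw i true)
      (rel_append hvar (rel_append (hblank false) hvar)))
  · exact rel_append hvar (rel_append (hblank true)
      (rel_append hvar (rel_append (forall₂_cover hw i false) hfill)))

theorem coe_cover_add (hw : ∀ j, w j ∈ lits clauses j) (i : Fin n) (pos : Bool) :
    (cover clauses w i pos : Multiset (Block n m)) + ∑ j, (if w j = (i, pos) then {.filler} else 0)
      = ∑ j, (if w j = (i, pos) then {.clause j} else 0) + occ clauses i • {.filler} := by
  have hpiece (j : Fin m) :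
      (((if w j = (i, pos) then
          .clause j :: replicate ((lits clauses j).count (i, pos) - 1) .filler
        else replicate ((lits clauses j).count (i, pos)) .filler) : List (Block n m)) :
          Multiset (Block n m)) + (if w j = (i, pos) then {.filler} else 0)
        = (if w j = (i, pos) then {.clause j} else 0)
          + (lits clauses j).count (i, pos) • {.filler} := by
    split_ifs with hj
    · obtain ⟨k, hk⟩ := Nat.exists_eq_add_one_of_ne_zero (count_pos_iff.2 (hj ▸ hw j)).ne'
      rw [hk, Nat.add_sub_cancel, ← Multiset.cons_coe, Multiset.coe_replicate,
        ← Multiset.singleton_add, succ_nsmul, Multiset.nsmul_singleton, add_assoc]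
    · simp [Multiset.nsmul_singleton, Multiset.coe_replicate]
  have hocc : ∑ j, (lits clauses j).count (i, pos) + litCount clauses i (!pos) = occ clauses i := by
    cases pos <;> simp [occ, litCount, add_comm]
  rw [cover, ← Multiset.coe_add, coe_flatten_map_finRange, add_right_comm,
    ← Finset.sum_add_distrib]
  simp only [hpiece, Finset.sum_add_distrib, ← hocc, add_nsmul, Finset.sum_smul,
    Multiset.coe_replicate, ← Multiset.nsmul_singleton, add_assoc]

theorem sum_coe_cover (hw : ∀ j, w j ∈ lits clauses j) (hwa : ∀ j, a (w j).1 = (w j).2) :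
    ∑ i, (cover clauses w i (a i) : Multiset (Block n m)) + m • {.filler}
      = ∑ j, {.clause j} + (3 * m) • {.filler} := by
  -- each clause is counted at the variable of its chosen literal only
  have hfiber (X : Fin m → Multiset (Block n m)) :
      ∑ i, ∑ j, (if w j = (i, a i) then X j else 0) = ∑ j, X j := by
    rw [Finset.sum_comm]
    refine Finset.sum_congr rfl fun j _ => ?_
    have hsel (i : Fin n) : w j = (i, a i) ↔ (w j).1 = i := by
      constructor
      · rintro h
        rw [h]
      · rintro rfl
        rw [hwa j]
    simp only [hsel, Finset.sum_ite_eq, Finset.mem_univ, if_true]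
  have := Finset.sum_congr rfl fun i (_ : i ∈ Finset.univ) => coe_cover_add hw i (a i)
  rw [Finset.sum_add_distrib, Finset.sum_add_distrib, hfiber, hfiber, ← Finset.sum_smul,
    sum_occ] at this
  simpa using this

theorem coe_segmentPieces (i : Fin n) :
    (segmentPieces clauses a w i : Multiset (List (Block n m)))
      = {varPiece clauses i} + {[.filler]}
        + (cover clauses w i (a i) : Multiset (Block n m)).map (fun x => [x]) := by
  rw [segmentPieces]
  split
  · simpa [*] using ((perm_append_singleton _ _).cons _).trans (.swap _ _ _)
  · simp [*]

theorem solution_perm (hw : ∀ j, w j ∈ lits clauses j) (hwa : ∀ j, a (w j).1 = (w j).2) :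
    (solution clauses a w).Perm (pieces clauses) := by
  have hmap := congrArg (Multiset.mapAddMonoidHom fun x : Block n m => [x]) (sum_coe_cover hw hwa)
  simp only [map_add, map_sum, map_nsmul, Multiset.mapAddMonoidHom_apply,
    Multiset.map_singleton] at hmap
  rw [← Multiset.coe_eq_coe]
  apply add_right_cancel (b := m • {[.filler]})
  rw [solution, coe_flatten_map_finRange]
  simp only [coe_segmentPieces, Finset.sum_add_distrib, add_assoc, hmap, pieces, ← Multiset.coe_add,
    coe_map_finRange, Multiset.coe_replicate, ← Multiset.nsmul_singleton, Finset.sum_const,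
    Finset.card_univ, Fintype.card_fin]
  rw [← add_nsmul, show n + 2 * m + m = n + 3 * m by ring, add_nsmul]
  abel

theorem scSol_of_satisfiable (q : ℕ) (ha : ∀ j, ∃ l ∈ lits clauses j, a l.1 = l.2) :
    SCSol (encode q (layout clauses)) ((pieces clauses).map (encode q)) := by
  choose w hw hwa using ha
  refine ⟨(solution clauses a w).map (encode q), (solution_perm hw hwa).map _, ?_⟩
  rw [← encode_flatten]
  refine fits_encode_of_forall₂ q ?_
  rw [solution, layout, flatten_flatten, map_map]
  exact rel_flatten (forall₂_map_left_iff.2 (forall₂_map_right_iff.2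
    (forall₂_same.2 fun i _ => forall₂_flatten_segmentPieces hw i)))

end Forward

section Backward

variable (clauses : Fin m → (Fin n × Bool) × (Fin n × Bool) × (Fin n × Bool))

def start (i : Fin n) : ℕ := (((finRange n).map (segment clauses)).take i).flatten.length

/-- The first block of `[.var i] ++ region clauses i pos ++ [.var i]` inside `layout clauses`. -/
def halfStart (i : Fin n) (pos : Bool) : ℕ :=
  start clauses i + if pos then 0 else occ clauses i + 1

variable {clauses}

theorem exists_of_getElem?_layout {p : ℕ} {x : Block n m} (h : (layout clauses)[p]? = some x) :
    ∃ i c, p = start clauses i + c ∧ (segment clauses i)[c]? = some x := by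
  obtain ⟨k, hk, c, rfl, hc⟩ := exists_of_getElem?_flatten h
  have hk' : k < n := by simpa using hk
  exact ⟨⟨k, hk'⟩, c, rfl, by simpa using hc⟩

theorem var_not_mem_region (i i' : Fin n) (pos : Bool) :
    Block.var i' ∉ region clauses i pos := by
  simp [region]

theorem clause_mem_region_iff {i : Fin n} {pos : Bool} {j : Fin m} :
    Block.clause j ∈ region clauses i pos ↔ (i, pos) ∈ lits clauses j := by
  simp [region, ← count_pos_iff, Nat.pos_iff_ne_zero]

theorem segment_getElem?_var {i i' : Fin n} {c : ℕ}
    (h : (segment clauses i)[c]? = some (.var i')) :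
    i' = i ∧ (c = 0 ∨ c = occ clauses i + 1 ∨ c = 2 * occ clauses i + 2) := by
  rcases getElem?_anchored h with ⟨hx, hc⟩ | ⟨-, -, hx⟩ | ⟨-, -, hx⟩
  · simp only [length_region] at hc
    exact ⟨by simpa using hx, by omega⟩
  all_goals exact absurd hx (var_not_mem_region _ _ _)

theorem segment_getElem?_clause {i : Fin n} {j : Fin m} {c : ℕ}
    (h : (segment clauses i)[c]? = some (.clause j)) :
    ∃ pos, (i, pos) ∈ lits clauses j ∧ (if pos then 0 else occ clauses i + 1) < c ∧
      c ≤ (if pos then 0 else occ clauses i + 1) + occ clauses i := by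
  rcases getElem?_anchored h with ⟨hx, -⟩ | ⟨hc₀, hc₁, hx⟩ | ⟨hc₀, hc₁, hx⟩
  · simp at hx
  · simp only [length_region] at hc₁
    exact ⟨true, clause_mem_region_iff.1 hx, by simp; omega, by simp; omega⟩
  · simp only [length_region] at hc₀ hc₁
    exact ⟨false, clause_mem_region_iff.1 hx, by simp; omega, by simp; omega⟩

theorem exists_eq_halfStart {i : Fin n} {p : ℕ} (h₁ : (layout clauses)[p]? = some (.var i))
    (h₂ : (layout clauses)[p + (occ clauses i + 1)]? = some (.var i)) :
    ∃ pos, p = halfStart clauses i pos := by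
  obtain ⟨i₁, c₁, hp₁, hc₁⟩ := exists_of_getElem?_layout h₁
  obtain ⟨i₂, c₂, hp₂, hc₂⟩ := exists_of_getElem?_layout h₂
  obtain ⟨rfl, hc₁⟩ := segment_getElem?_var hc₁
  obtain ⟨rfl, hc₂⟩ := segment_getElem?_var hc₂
  rcases hc₁ with rfl | rfl | rfl
  · exact ⟨true, by simp [halfStart, hp₁]⟩
  · exact ⟨false, by simp [halfStart, hp₁]⟩
  · omega

theorem exists_lt_of_getElem?_layout_clause {j : Fin m} {p : ℕ}
    (h : (layout clauses)[p]? = some (.clause j)) :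
    ∃ i pos, (i, pos) ∈ lits clauses j ∧ halfStart clauses i pos < p ∧
      p ≤ halfStart clauses i pos + occ clauses i := by
  obtain ⟨i, c, rfl, hc⟩ := exists_of_getElem?_layout h
  obtain ⟨pos, hmem, hlo, hhi⟩ := segment_getElem?_clause hc
  exact ⟨i, pos, hmem, by simp only [halfStart]; omega, by simp only [halfStart]; omega⟩

theorem satisfiable_of_scSol {q : ℕ} (hq : 0 < q) (hnm : n + m ≤ 2 ^ q)
    (h : SCSol (encode q (layout clauses)) ((pieces clauses).map (encode q))) :
    ∃ a : Fin n → Bool, ∀ j, ∃ l ∈ lits clauses j, a l.1 = l.2 := by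
  obtain ⟨u, hu, hfit⟩ := h
  obtain ⟨U, hU, rfl⟩ := exists_perm_map_eq hu
  replace hfit : Fits (encode q U.flatten) (encode q (layout clauses)) := by
    rwa [encode_flatten]
  have hread {x : Block n m} (hx : x ≠ .filler) (hx' : x ≠ .blank) {k c : ℕ} (hk : k < U.length)
      (hc : c < U[k].length) (hUx : U[k][c]? = some x) :
      (layout clauses)[(U.take k).flatten.length + c]? = some x :=
    getElem?_eq_of_fits_encode hq hnm hx hx' hfit
      (by rwa [getElem?_flatten_length_take_add U hk hc])
  have hvar (i : Fin n) : ∃ k, ∃ hk : k < U.length, U[k] = varPiece clauses i ∧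
      ∃ pos, (U.take k).flatten.length = halfStart clauses i pos := by
    obtain ⟨k, hk, hUk⟩ := getElem_of_mem (hU.mem_iff.2
      (mem_append_left _ (mem_append_left _ (mem_map_of_mem (mem_finRange i)))))
    have h₀ := hread (x := .var i) (c := 0) (by simp) (by simp) hk (by simp [hUk, varPiece])
      (by simp [hUk, varPiece])
    have h₁ := hread (x := .var i) (c := occ clauses i + 1) (by simp) (by simp) hk
      (by simp [hUk, varPiece]) (by simp [hUk, varPiece])
    exact ⟨k, hk, hUk, exists_eq_halfStart h₀ h₁⟩
  choose K hK hUK pos hpos using hvar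
  refine ⟨fun i => !pos i, fun j => ?_⟩
  obtain ⟨k, hk, hUk⟩ := getElem_of_mem (hU.mem_iff.2
    (mem_append_left _ (mem_append_right _ (mem_map_of_mem (f := fun j => [Block.clause j])
      (mem_finRange j)))))
  have hc := hread (x := .clause j) (c := 0) (by simp) (by simp) hk (by simp [hUk]) (by simp [hUk])
  obtain ⟨i, p, hmem, hlo, hhi⟩ := exists_lt_of_getElem?_layout_clause hc
  refine ⟨(i, p), hmem, ?_⟩
  have hne : K i ≠ k := by
    intro h
    have := hUK i
    simp only [h, hUk] at this
    simpa [varPiece] using congrArg length this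
  -- the clause piece lies strictly inside the half of `(i, p)`, so that half is not the one
  -- occupied by the piece of variable `i`
  have : p ≠ pos i := by
    rintro rfl
    rcases lt_or_gt_of_ne hne with h | h
    · have := length_flatten_take_add_le U h hk.le
      simp only [hUK, hpos, varPiece, length_append, length_singleton, length_replicate] at this
      omega
    · have := length_flatten_take_add_le U h (hK i).le
      simp only [hUk, hpos, length_singleton] at this
      omega
  exact (Bool.eq_not_iff.2 this).symm

end Backward

end StringCrafting

open StringCrafting

/-- Variables are numbered `1,…,n` (variable `i : Fin n` has number `i+1`), clauses are numbered
`n+1,…,n+m` (clause `j : Fin m` has number `n+1+j`); a literal is a pair of a variable and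
a `Bool` (its sign), and each clause consists of exactly three literals. -/
theorem threeSat_iff_stringCrafting (n m : ℕ)
    (clauses : Fin m → (Fin n × Bool) × (Fin n × Bool) × (Fin n × Bool)) :
    let q := Nat.clog 2 (n + m)
    let r := 4 * q + 2
    -- the three literals of a clause
    let lits : Fin m → List (Fin n × Bool) :=
      fun j => [(clauses j).1, (clauses j).2.1, (clauses j).2.2]
    -- number of occurrences (with multiplicity) of the literal `(i, pos)` in the clauses
    let cnt : Fin n → Bool → ℕ := fun i pos => ∑ j : Fin m, (lits j).count (i, pos)
    -- `f_i = c_i + d_i`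
    let f : Fin n → ℕ := fun i => cnt i true + cnt i false
    -- `a^{x_i}` (for `pos = true`) resp. `a^{¬x_i}` (for `pos = false`): the concatenation,
    -- in a fixed order, of `id(j)` over occurrences of the literal in clauses `C_j`,
    -- followed by the appropriate number of copies of the filler string
    let aStr : Fin n → Bool → List Bool := fun i pos =>
      ((List.finRange m).map (fun j =>
        (List.replicate ((lits j).count (i, pos)) (idStr q (n + 1 + j.val))).flatten)).flatten
      ++ (List.replicate (cnt i !pos) (fillerStr r)).flatten
    -- `b^i = id(i) · a^{x_i} · id(i) · a^{¬x_i} · id(i)`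
    let b : Fin n → List Bool := fun i =>
      idStr q (i.val + 1) ++ aStr i true ++ idStr q (i.val + 1) ++ aStr i false
        ++ idStr q (i.val + 1)
    -- `s = b^1 · b^2 ⋯ b^n`
    let s : List Bool := ((List.finRange n).map b).flatten
    -- the collection of strings: variable selection strings, clause verification strings,
    -- and `n + 2m` filler strings
    let ts : List (List Bool) :=
      (List.finRange n).map (fun i =>
        idStr q (i.val + 1) ++ List.replicate (r * f i) false ++ idStr q (i.val + 1))
      ++ (List.finRange m).map (fun j => idStr q (n + 1 + j.val))
      ++ List.replicate (n + 2 * m) (fillerStr r)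
    -- satisfiability of the 3-CNF formula is equivalent to solvability of the instance
    ((∃ a : Fin n → Bool, ∀ j : Fin m,
        a (clauses j).1.1 = (clauses j).1.2 ∨
        a (clauses j).2.1.1 = (clauses j).2.1.2 ∨
        a (clauses j).2.2.1 = (clauses j).2.2.2) ↔
      SCSol s ts) := by
  intro q r lits cnt f aStr b s ts
  have hs : s = encode q (layout clauses) := by
    rw [encode_layout]
    simp only [encode_region]
    rfl
  have hts : ts = (pieces clauses).map (encode q) := (map_encode_pieces clauses q).symm
  simp only [hs, hts, ← exists_mem_lits_iff]
  refine ⟨fun ⟨a, ha⟩ => scSol_of_satisfiable q ha, fun h => ?_⟩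
  rcases Nat.eq_zero_or_pos m with rfl | hm
  · exact ⟨fun _ => true, fun j => j.elim0⟩
  have hn : 0 < n := (clauses ⟨0, hm⟩).1.1.pos
  exact satisfiable_of_scSol (Nat.clog_pos one_lt_two (by omega)) (Nat.le_pow_clog one_lt_two _) h
end

section
/- Let s be a binary string and t_1,…,t_n binary strings with Σ_{i=1}^n |t_i| = |s|. If the String Crafting instance (s; t_1,…,t_n) has a solution, then the disjoint union of the caterpillars C(t_1),…,C(t_n) is isomorphic to a subgraph of the caterpillar C(s). -/
/-- Vertices of the caterpillar `C(w)`: path vertices `v_1,…,v_{|w|}` (`Sum.inl`) and,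
for each position `i` with `w(i) = 1`, a hair vertex `h_i` (`Sum.inr`). -/
abbrev CatV (w : List Bool) : Type := Fin w.length ⊕ {i : Fin w.length // w.get i = true}

/-- The edges of a caterpillar, as a relation between vertex types of (possibly two
different) caterpillars: consecutive path vertices are adjacent, and each hair vertex is
adjacent to the path vertex at its position. -/
def catRel (w₁ w₂ : List Bool) : CatV w₁ → CatV w₂ → Prop
  | Sum.inl i, Sum.inl j => i.val + 1 = j.val
  | Sum.inl i, Sum.inr h => i.val = h.val.val
  | _, _ => False

/-- The caterpillar `C(w)`. -/
def Cat (w : List Bool) : SimpleGraph (CatV w) := SimpleGraph.fromRel (catRel w w)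

/-- The disjoint union of the caterpillars `C(t_1),…,C(t_n)`. -/
def CatUnion (ts : List (List Bool)) : SimpleGraph (Σ i : Fin ts.length, CatV (ts.get i)) :=
  SimpleGraph.fromRel (fun a b => a.1 = b.1 ∧ catRel (ts.get a.1) (ts.get b.1) a.2 b.2)

/-!
Lay the strings out along `s` in the order given by the solution, so that each `t_i` occupies
its own block of consecutive positions of `s`. Shifting `C(t_i)` into its block sends path edges
to path edges, and each hair lands at a position where `s` has a `1`, hence onto a hair of `C(s)`.
Distinct blocks are disjoint, so the combined map is injective.
-/

open Classical in
theorem List.Perm.exists_equiv_get {α : Type*} {l₁ l₂ : List α} (h : l₁.Perm l₂) :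
    ∃ e : Fin l₁.length ≃ Fin l₂.length, ∀ i, l₂.get (e i) = l₁.get i := by
  have hcard (a : α) :
      Fintype.card {i // l₁.get i = a} = Fintype.card {j // l₂.get j = a} := by
    simp only [Fintype.card_subtype]
    exact (Fin.card_filter_univ_eq_vector_get_eq_count a ⟨l₁, rfl⟩).trans
      (h.count_eq a ▸ (Fin.card_filter_univ_eq_vector_get_eq_count a ⟨l₂, rfl⟩).symm)
  exact ⟨Equiv.ofFiberEquiv fun a => Fintype.equivOfCardEq (hcard a), Equiv.ofFiberEquiv_map _⟩

section Blocks

variable {α : Type*}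

def blockStart (L : List (List α)) (k : ℕ) : ℕ := ((L.map List.length).take k).sum

theorem blockStart_succ (L : List (List α)) {k : ℕ} (hk : k < L.length) :
    blockStart L (k + 1) = blockStart L k + L[k].length := by
  rw [blockStart, blockStart, List.sum_take_succ _ k (by simpa using hk), List.getElem_map]

theorem getD_flatten_blockStart_add (L : List (List α)) (d : α) {k : ℕ} (hk : k < L.length)
    {j : ℕ} (hj : j < L[k].length) : L.flatten.getD (blockStart L k + j) d = L[k][j] := by
  have hsplit : L.flatten = (L.take k).flatten ++ (L[k] ++ (L.drop (k + 1)).flatten) := by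
    rw [← List.flatten_cons, ← List.drop_eq_getElem_cons hk, ← List.flatten_append,
      List.take_append_drop]
  have hstart : (L.take k).flatten.length = blockStart L k := by
    rw [List.length_flatten, List.map_take, blockStart]
  rw [hsplit, List.getD_append_right _ _ _ _ (by omega), hstart, Nat.add_sub_cancel_left,
    List.getD_append _ _ _ _ hj, List.getD_eq_getElem]

theorem pairwise_disjoint_blocks (L : List (List α)) :
    Pairwise (Function.onFun Disjoint fun k : Fin L.length =>
      Set.Ico (blockStart L k) (blockStart L k + L[k].length)) := by
  have h := (List.monotone_sum_take (L.map List.length)).pairwise_disjoint_on_Ico_succ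
    |>.comp_of_injective (Fin.val_injective (n := L.length))
  convert h using 3 with k
  change _ = Set.Ico (blockStart L k) (blockStart L (k + 1))
  rw [blockStart_succ L k.isLt, Fin.getElem_fin]

end Blocks

def FitsAt (t s : List Bool) (o : ℕ) : Prop :=
  o + t.length ≤ s.length ∧ ∀ j (hj : j < t.length), t[j] = true → s.getD (o + j) false = true

theorem FitsAt.mono {t w s : List Bool} {o : ℕ} (h : FitsAt t w o) (hlen : w.length ≤ s.length)
    (hle : ∀ p, w.getD p false = true → s.getD p false = true) : FitsAt t s o :=
  ⟨h.1.trans hlen, fun j hj ht => hle _ (h.2 j hj ht)⟩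

theorem fitsAt_blockStart (L : List (List Bool)) {k : ℕ} (hk : k < L.length) :
    FitsAt L[k] L.flatten (blockStart L k) := by
  refine ⟨?_, fun j hj ht => by rwa [getD_flatten_blockStart_add L false hk hj]⟩
  rw [← blockStart_succ L hk, List.length_flatten, blockStart]
  exact List.Sublist.sum_le_sum (List.take_sublist _ _) (fun _ _ => Nat.zero_le _)

def catPos {w : List Bool} : CatV w → Fin w.length := Sum.elim id Subtype.val

section Shift

variable {t s : List Bool} {o : ℕ} (h : FitsAt t s o)

def catShift : CatV t → CatV s
  | .inl i => .inl ⟨o + i, by have := h.1; omega⟩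
  | .inr i => .inr ⟨⟨o + i.1, by have := h.1; omega⟩, by
      rw [List.get_eq_getElem, ← List.getD_eq_getElem s false]
      exact h.2 _ _ i.2⟩

theorem catPos_catShift (x : CatV t) : (catPos (catShift h x) : ℕ) = o + catPos x := by
  cases x <;> rfl

theorem catShift_injective : Function.Injective (catShift h) := by
  rintro (i | i) (j | j) hij <;> simp_all [catShift, Fin.ext_iff, Subtype.ext_iff]

theorem catRel_catShift {x y : CatV t} (hxy : catRel t t x y) :
    catRel s s (catShift h x) (catShift h y) := by
  cases x <;> cases y <;> simp_all [catRel, catShift]; omega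

end Shift

theorem exists_catUnion_embedding (s : List Bool) (ts : List (List Bool)) (o : Fin ts.length → ℕ)
    (hfit : ∀ i, FitsAt (ts.get i) s (o i))
    (hdisj : Pairwise (Function.onFun Disjoint fun i => Set.Ico (o i) (o i + (ts.get i).length))) :
    ∃ f : (Σ i : Fin ts.length, CatV (ts.get i)) → CatV s,
      Function.Injective f ∧ ∀ u v, (CatUnion ts).Adj u v → (Cat s).Adj (f u) (f v) := by
  let f : (Σ i : Fin ts.length, CatV (ts.get i)) → CatV s := fun a => catShift (hfit a.1) a.2
  have hf : Function.Injective f := by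
    rintro ⟨i, x⟩ ⟨j, y⟩ hxy
    obtain rfl : i = j := by
      by_contra hij
      have hpos := congrArg (fun v => (catPos v : ℕ)) hxy
      simp only [f, catPos_catShift] at hpos
      have hx := (catPos x).isLt
      have hy := (catPos y).isLt
      have hmem : o i + (catPos x : ℕ) ∈ Set.Ico (o i) (o i + (ts.get i).length) :=
        ⟨by omega, by omega⟩
      exact Set.disjoint_left.1 (hdisj hij) hmem ⟨by omega, by omega⟩
    obtain rfl := catShift_injective (hfit i) hxy
    rfl
  have hrel : ∀ a b : Σ i : Fin ts.length, CatV (ts.get i),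
      a.1 = b.1 ∧ catRel (ts.get a.1) (ts.get b.1) a.2 b.2 → catRel s s (f a) (f b) := by
    rintro ⟨i, x⟩ ⟨j, y⟩ ⟨rfl, hxy⟩
    exact catRel_catShift _ hxy
  refine ⟨f, hf, fun a b hab => ?_⟩
  rw [CatUnion, SimpleGraph.fromRel_adj] at hab
  exact (SimpleGraph.fromRel_adj _ _ _).2 ⟨hf.ne hab.1, hab.2.imp (hrel a b) (hrel b a)⟩

/-- If the String Crafting instance `(s; t_1,…,t_n)` has a solution, then the disjoint union
of the caterpillars `C(t_1),…,C(t_n)` is isomorphic to a subgraph of the caterpillar `C(s)`. -/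
theorem catUnion_subgraph_of_stringCrafting (s : List Bool) (ts : List (List Bool))
    (hlen : (ts.map List.length).sum = s.length)
    (hsol : SCSol s ts) :
    ∃ f : (Σ i : Fin ts.length, CatV (ts.get i)) → CatV s,
      Function.Injective f ∧
      ∀ u v, (CatUnion ts).Adj u v → (Cat s).Adj (f u) (f v) := by
  obtain ⟨u, hperm, hle⟩ := hsol
  obtain ⟨e, he⟩ := hperm.symm.exists_equiv_get
  have hlen_u : u.flatten.length = s.length := by
    rw [List.length_flatten, (hperm.map List.length).sum_eq, hlen]
  refine exists_catUnion_embedding s ts (fun i => blockStart u (e i)) (fun i => ?_) ?_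
  · rw [← he i]
    exact (fitsAt_blockStart u (e i).isLt).mono hlen_u.le hle
  · convert (pairwise_disjoint_blocks u).comp_of_injective e.injective using 4 with i
    rw [← he i]
    rfl
end

section
/- Let s be a binary string and t_1,…,t_n binary strings with Σ_{i=1}^n |t_i| = |s|, where each t_i is a palindrome whose first and last characters are 1. If the disjoint union of the caterpillars C(t_1),…,C(t_n) is isomorphic to a subgraph of the caterpillar C(s), then the String Crafting instance (s; t_1,…,t_n) has a solution. -/
lemma cat_adj_elim {w : List Bool} {x y : CatV w} (h : (Cat w).Adj x y) :
    (∃ p q : Fin w.length, x = Sum.inl p ∧ y = Sum.inl q ∧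
      (p.val + 1 = q.val ∨ q.val + 1 = p.val)) ∨
    (∃ hh : {i : Fin w.length // w.get i = true},
      (x = Sum.inl hh.val ∧ y = Sum.inr hh) ∨ (x = Sum.inr hh ∧ y = Sum.inl hh.val)) := by
  rw [Cat, SimpleGraph.fromRel_adj] at h
  obtain ⟨hne, h⟩ := h
  rcases x with p | a <;> rcases y with q | b
  · left
    refine ⟨p, q, rfl, rfl, ?_⟩
    simpa [catRel] using h
  · right
    refine ⟨b, Or.inl ⟨?_, rfl⟩⟩
    have hb : p.val = b.val.val := by simpa [catRel] using h
    exact congrArg Sum.inl (Fin.ext hb)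
  · right
    refine ⟨a, Or.inr ⟨rfl, ?_⟩⟩
    have ha : q.val = a.val.val := by simpa [catRel] using h
    exact congrArg Sum.inl (Fin.ext ha)
  · simp [catRel] at h

lemma cat_steps (m : ℕ) (g : ℕ → ℕ)
    (hinj : ∀ a < m, ∀ b < m, g a = g b → a = b)
    (hstep : ∀ j, j + 1 < m → g (j+1) = g j + 1 ∨ g j = g (j+1) + 1) :
    (∀ j < m, g j = g 0 + j) ∨ (∀ j < m, g j + j = g 0) := by
  by_cases hm : m ≤ 1
  · left; intro j hj
    have : j = 0 := by omega
    subst this; simp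
  · push_neg at hm
    rcases hstep 0 (by omega) with h0 | h0
    · rw [show (0:ℕ)+1 = 1 by omega] at h0
      left
      intro j
      induction j using Nat.strong_induction_on with
      | _ j ih =>
        intro hj
        match j with
        | 0 => simp
        | 1 => omega
        | (k+2) =>
          have h1 : g (k+1) = g 0 + (k+1) := ih (k+1) (by omega) (by omega)
          have h2 : g k = g 0 + k := ih k (by omega) (by omega)
          rcases hstep (k+1) (by omega) with h | h <;>
            rw [show k+1+1 = k+2 by omega] at h
          · omega
          · have := hinj (k+2) (by omega) k (by omega) (by omega)
            omega
    · rw [show (0:ℕ)+1 = 1 by omega] at h0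
      right
      intro j
      induction j using Nat.strong_induction_on with
      | _ j ih =>
        intro hj
        match j with
        | 0 => simp
        | 1 => omega
        | (k+2) =>
          have h1 : g (k+1) + (k+1) = g 0 := ih (k+1) (by omega) (by omega)
          have h2 : g k + k = g 0 := ih k (by omega) (by omega)
          rcases hstep (k+1) (by omega) with h | h <;>
            rw [show k+1+1 = k+2 by omega] at h
          · have := hinj (k+2) (by omega) k (by omega) (by omega)
            omega
          · omega

lemma scsol_aux : ∀ (N : ℕ) (ts : List (List Bool)), ts.length ≤ N →
    ∀ (s : List Bool) (A : Fin ts.length → ℕ),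
    (ts.map List.length).sum = s.length →
    (∀ i : Fin ts.length, (ts.get i).length ≠ 0) →
    (∀ i j : Fin ts.length, ∀ p : ℕ, A i ≤ p → p < A i + (ts.get i).length →
        A j ≤ p → p < A j + (ts.get j).length → i = j) →
    (∀ p : ℕ, p < s.length → ∃ i : Fin ts.length, A i ≤ p ∧ p < A i + (ts.get i).length) →
    (∀ i : Fin ts.length, ∀ k : ℕ, k < (ts.get i).length →
        (ts.get i).getD k false = true → s.getD (A i + k) false = true) →
    ∃ u : List (List Bool), u.Perm ts ∧
      ∀ p : ℕ, u.flatten.getD p false = true → s.getD p false = true := by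
  intro N
  induction N with
  | zero =>
    intro ts hts s A _ _ _ _ _
    have : ts = [] := List.eq_nil_of_length_eq_zero (by omega)
    subst this
    exact ⟨[], by simp, by simp [List.getD]⟩
  | succ N ih =>
    intro ts hts s A hsum hne hdisj hcov hmark
    rcases eq_or_ne ts [] with rfl | htsne
    · exact ⟨[], by simp, by simp [List.getD]⟩
    · have hlen0 : 0 < ts.length := List.length_pos_iff.mpr htsne
      -- s is nonempty
      have hpos : 0 < s.length := by
        rcases ts with _ | ⟨t, ts''⟩
        · simp at htsne
        · have h0 := hne ⟨0, by simp⟩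
          simp only [List.map_cons, List.sum_cons] at hsum
          simp only [List.get] at h0
          omega
      obtain ⟨i0, hi0l, hi0r⟩ := hcov 0 hpos
      have hA0 : A i0 = 0 := by omega
      set m := (ts.get i0).length with hm
      -- split the list
      have hsplit : ts = ts.take i0.val ++ ts.get i0 :: ts.drop (i0.val + 1) := by
        conv_lhs => rw [← List.take_append_drop i0.val ts]
        rw [← List.getElem_cons_drop i0.isLt]
        rfl
      set ts' : List (List Bool) := ts.take i0.val ++ ts.drop (i0.val + 1) with hts'
      have hperm : ts.Perm (ts.get i0 :: ts') := by
        conv_lhs => rw [hsplit]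
        exact List.perm_middle
      have hlen' : ts'.length = ts.length - 1 := by
        simp [hts', List.length_take, List.length_drop]
        omega
      have hi0lt : i0.val < ts.length := i0.isLt
      -- embedding of indices
      have hembd : ∀ j : Fin ts'.length, j.val < ts.length - 1 := fun j => by
        have := j.isLt; omega
      set emb : Fin ts'.length → Fin ts.length := fun j =>
        if j.val < i0.val then ⟨j.val, by omega⟩ else ⟨j.val + 1, by have := hembd j; omega⟩
        with hemb
      have hembne : ∀ j, emb j ≠ i0 := by
        intro j hc
        have hc2 := congrArg Fin.val hc
        simp only [hemb] at hc2
        split at hc2 <;> simp only [Fin.val_mk] at hc2 <;> omega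
      have hget : ∀ j : Fin ts'.length, ts'.get j = ts.get (emb j) := by
        intro j
        have hj := j.isLt
        have hjlen : j.val < i0.val + (ts.length - (i0.val + 1)) := by
          simp only [hts', List.length_append, List.length_take, List.length_drop] at hj
          omega
        simp only [hemb]
        rcases lt_or_ge j.val i0.val with h | h
        · rw [if_pos h]
          simp only [hts', List.get_eq_getElem, List.getElem_append]
          rw [dif_pos (by simp only [List.length_take]; omega)]
          simp [List.getElem_take]
        · rw [if_neg (by omega)]
          simp only [hts', List.get_eq_getElem, List.getElem_append]
          rw [dif_neg (by simp only [List.length_take]; omega)]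
          simp only [List.getElem_drop, List.length_take, Fin.val_mk]
          congr 1
          omega
      -- every other interval is ≥ m
      have hge : ∀ i : Fin ts.length, i ≠ i0 → m ≤ A i := by
        intro i hi
        by_contra hc
        push_neg at hc
        have h1 := hne i
        exact hi (hdisj i i0 (A i) le_rfl (by omega) (by omega) (by omega))
      set s' := s.drop m with hs'
      have hdropD : ∀ q : ℕ, s'.getD q false = s.getD (m + q) false := by
        intro q
        simp only [hs', List.getD_eq_getElem?_getD, List.getElem?_drop]
      have hsum2 : m + (ts'.map List.length).sum = s.length := by
        have := (hperm.map List.length).sum_eq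
        simp only [List.map_cons, List.sum_cons] at this
        omega
      have hmle : m ≤ s.length := by omega
      set A' : Fin ts'.length → ℕ := fun j => A (emb j) - m with hA'
      have hgeA : ∀ j : Fin ts'.length, m ≤ A (emb j) := fun j => hge _ (hembne j)
      -- apply induction hypothesis
      obtain ⟨u', hpermu, hpropu⟩ := ih ts' (by omega) s' A'
        (by simp only [hs', List.length_drop]; omega)
        (by intro j; rw [hget]; exact hne _)
        (by
          intro i j p h1 h2 h3 h4
          rw [hget] at h2 h4
          have e1 := hgeA i; have e2 := hgeA j
          have := hdisj (emb i) (emb j) (p + m) (by simp only [hA'] at h1; omega)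
            (by simp only [hA'] at h2; omega) (by simp only [hA'] at h3; omega)
            (by simp only [hA'] at h4; omega)
          simp only [hemb] at this
          split at this <;> split at this <;> (rw [Fin.ext_iff] at this ⊢; simp at this ⊢; omega)
        )
        (by
          intro p hp
          have hp' : p + m < s.length := by
            simp only [hs', List.length_drop] at hp; omega
          obtain ⟨i, h1, h2⟩ := hcov (p + m) hp'
          have hne0 : i ≠ i0 := by
            intro hc; subst hc; omega
          -- find preimage under emb
          have : ∃ j : Fin ts'.length, emb j = i := by
            rcases lt_or_ge i.val i0.val with h | h
            · exact ⟨⟨i.val, by omega⟩, by simp only [hemb]; rw [if_pos h]⟩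
            · have : i0.val < i.val := by
                rcases Nat.eq_or_lt_of_le h with h' | h'
                · exact absurd (Fin.ext h'.symm) hne0
                · omega
              refine ⟨⟨i.val - 1, by omega⟩, ?_⟩
              simp only [hemb]
              rw [if_neg (by omega)]
              apply Fin.ext; simp; omega
          obtain ⟨j, rfl⟩ := this
          refine ⟨j, ?_, ?_⟩
          · simp only [hA']; have := hgeA j; omega
          · simp only [hA', hget j]; have := hgeA j; omega
        )
        (by
          intro j k hk ht
          rw [hget] at hk ht
          have := hgeA j
          have h2 := hmark (emb j) k hk ht
          rw [hdropD]
          rw [show m + (A' j + k) = A (emb j) + k by simp only [hA']; omega]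
          exact h2
        )
      refine ⟨ts.get i0 :: u', (hpermu.cons _).trans hperm.symm, ?_⟩
      intro p hp
      simp only [List.flatten_cons] at hp
      rcases lt_or_ge p m with h | h
      · rw [List.getD_append _ _ _ _ h] at hp
        have := hmark i0 p h hp
        rwa [hA0, Nat.zero_add] at this
      · rw [List.getD_append_right _ _ _ _ h] at hp
        have := hpropu _ hp
        rw [hdropD] at this
        rwa [show m + (p - m) = p by omega] at this

lemma pal_getElem {t : List Bool} (hp : t.reverse = t) {k m : ℕ} (hk : k < t.length)
    (hm : m < t.length) (hkm : k + m + 1 = t.length) : t[k] = t[m] := by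
  have h1 : t[k]? = t[m]? := by
    conv_lhs => rw [← hp]
    rw [List.getElem?_reverse (by simpa using hk)]
    congr 1
    omega
  rw [List.getElem?_eq_getElem hk, List.getElem?_eq_getElem hm] at h1
  exact Option.some.inj h1

/-- If each `t_i` is a palindrome starting and ending with a `1`, and the disjoint union of
the caterpillars `C(t_1),…,C(t_n)` is isomorphic to a subgraph of the caterpillar `C(s)`,
then the String Crafting instance `(s; t_1,…,t_n)` has a solution. -/
theorem stringCrafting_of_catUnion_subgraph (s : List Bool) (ts : List (List Bool))
    (hlen : (ts.map List.length).sum = s.length)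
    (hpal : ∀ t ∈ ts, t.reverse = t)
    (hhead : ∀ t ∈ ts, t.head? = some true)
    (hlast : ∀ t ∈ ts, t.getLast? = some true)
    (hemb : ∃ f : (Σ i : Fin ts.length, CatV (ts.get i)) → CatV s,
      Function.Injective f ∧
      ∀ u v, (CatUnion ts).Adj u v → (Cat s).Adj (f u) (f v)) :
    SCSol s ts := by

  classical
  obtain ⟨f, hinj, hf⟩ := hemb
  have hlen1 : ∀ i : Fin ts.length, 0 < (ts.get i).length := by
    intro i
    have hh := hhead _ (show ts.get i ∈ ts from List.get_mem ts i)
    cases h : ts.get i with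
    | nil => rw [h] at hh; simp at hh
    | cons a l => simp [h]
  have hget0 : ∀ i : Fin ts.length, (ts.get i).get ⟨0, hlen1 i⟩ = true := by
    intro i
    have hh := hhead _ (show ts.get i ∈ ts from List.get_mem ts i)
    rw [List.head?_eq_getElem?, List.getElem?_eq_getElem (hlen1 i)] at hh
    simpa using hh
  have hgetlast : ∀ i : Fin ts.length,
      (ts.get i).get ⟨(ts.get i).length - 1, by have := hlen1 i; omega⟩ = true := by
    intro i
    have hh := hlast _ (show ts.get i ∈ ts from List.get_mem ts i)
    rw [List.getLast?_eq_getElem?,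
      List.getElem?_eq_getElem (by have := hlen1 i; omega)] at hh
    simpa using hh
  -- adjacency introduction in the union
  have hadj : ∀ (i : Fin ts.length) (x y : CatV (ts.get i)), x ≠ y →
      catRel (ts.get i) (ts.get i) x y → (CatUnion ts).Adj ⟨i, x⟩ ⟨i, y⟩ := by
    intro i x y hne hr
    rw [CatUnion, SimpleGraph.fromRel_adj]
    refine ⟨?_, Or.inl ⟨rfl, hr⟩⟩
    intro hc
    exact hne (eq_of_heq (Sigma.mk.inj_iff.mp hc).2)
  have hinj' : ∀ (i : Fin ts.length) (x y : CatV (ts.get i)),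
      f ⟨i, x⟩ = f ⟨i, y⟩ → x = y := by
    intro i x y h
    exact eq_of_heq (Sigma.mk.inj_iff.mp (hinj h)).2
  have hinjI : ∀ (i j : Fin ts.length) (x : CatV (ts.get i)) (y : CatV (ts.get j)),
      f ⟨i, x⟩ = f ⟨j, y⟩ → i = j :=
    fun i j x y h => (Sigma.mk.inj_iff.mp (hinj h)).1
  -- a hair of C(s) is adjacent only to its path vertex
  have hcodr : ∀ (a : {i : Fin s.length // s.get i = true}) (y : CatV s),
      (Cat s).Adj (Sum.inr a) y → y = Sum.inl a.val := by
    intro a y h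
    rcases cat_adj_elim h with ⟨p, q, hx, _, _⟩ | ⟨hh, ⟨hx, _⟩ | ⟨hx, hy⟩⟩
    · simp at hx
    · simp at hx
    · obtain rfl : a = hh := by
        injection hx
      exact hy
  -- a vertex with two distinct neighbours maps to a path vertex
  have hdeg : ∀ (a b c : Σ i : Fin ts.length, CatV (ts.get i)),
      (CatUnion ts).Adj a b → (CatUnion ts).Adj a c → b ≠ c →
      ∃ p : Fin s.length, f a = Sum.inl p := by
    intro a b c h1 h2 hbc
    rcases hx : f a with p | hh
    · exact ⟨p, rfl⟩
    · have e1 := hf _ _ h1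
      have e2 := hf _ _ h2
      rw [hx] at e1 e2
      have := (hcodr _ _ e1).trans (hcodr _ _ e2).symm
      exact absurd (hinj this) hbc
  -- spine vertices of long pieces map to path vertices
  have hspine0 : ∀ (i : Fin ts.length), 2 ≤ (ts.get i).length →
      ∀ j : Fin (ts.get i).length, ∃ p, f ⟨i, Sum.inl j⟩ = Sum.inl p := by
    intro i h2 j
    rcases Nat.eq_zero_or_pos j.val with h0 | hpos
    · -- neighbours: inl 1 and the hair at 0
      refine hdeg _ ⟨i, Sum.inl ⟨j.val + 1, by omega⟩⟩
        ⟨i, Sum.inr ⟨⟨0, hlen1 i⟩, hget0 i⟩⟩ ?_ ?_ (by simp)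
      · exact hadj i _ _ (by simp [Fin.ext_iff]) (by simp [catRel])
      · refine hadj i _ _ (by simp) ?_
        simp [catRel, h0]
    · rcases Nat.lt_or_ge (j.val + 1) (ts.get i).length with hlt | hge
      · -- neighbours: inl (j-1) and inl (j+1)
        refine hdeg _ ⟨i, Sum.inl ⟨j.val - 1, by omega⟩⟩
          ⟨i, Sum.inl ⟨j.val + 1, hlt⟩⟩ ?_ ?_ (by simp [Fin.ext_iff] <;> omega)
        · exact (hadj i _ _ (by simp [Fin.ext_iff] <;> omega) (by simp [catRel] <;> omega)).symm
        · exact hadj i _ _ (by simp [Fin.ext_iff] <;> omega) (by simp [catRel])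
      · -- j is the last vertex: neighbours inl (j-1) and the hair at the end
        have hj : j.val = (ts.get i).length - 1 := by have := j.isLt; omega
        refine hdeg _ ⟨i, Sum.inl ⟨j.val - 1, by omega⟩⟩
          ⟨i, Sum.inr ⟨⟨(ts.get i).length - 1, by omega⟩, hgetlast i⟩⟩ ?_ ?_ (by simp)
        · exact (hadj i _ _ (by simp [Fin.ext_iff] <;> omega) (by simp [catRel] <;> omega)).symm
        · refine hadj i _ _ (by simp) ?_
          simp [catRel, hj]
  choose e he using hspine0
  have hstepadj : ∀ (i : Fin ts.length) (h2 : 2 ≤ (ts.get i).length)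
      (j j' : Fin (ts.get i).length), j.val + 1 = j'.val →
      (e i h2 j').val = (e i h2 j).val + 1 ∨ (e i h2 j).val = (e i h2 j').val + 1 := by
    intro i h2 j j' hjj
    have hadj1 : (CatUnion ts).Adj ⟨i, Sum.inl j⟩ ⟨i, Sum.inl j'⟩ :=
      hadj i _ _ (by simp [Fin.ext_iff] <;> omega) (by simp [catRel] <;> omega)
    have hE := hf _ _ hadj1
    rw [he i h2 j, he i h2 j'] at hE
    rcases cat_adj_elim hE with ⟨p, q, hx, hy, hpq⟩ | ⟨hh, ⟨hx, hy⟩ | ⟨hx, hy⟩⟩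
    · obtain rfl := Sum.inl.inj hx
      obtain rfl := Sum.inl.inj hy
      omega
    · simp at hy
    · simp at hx
  have perpiece : ∀ i : Fin ts.length, ∃ a : ℕ,
      a + (ts.get i).length ≤ s.length ∧
      (∀ k, k < (ts.get i).length → ∃ q : Fin s.length, q.val = a + k ∧
        ∃ x : CatV (ts.get i), f ⟨i, x⟩ = Sum.inl q) ∧
      (2 ≤ (ts.get i).length →
        (∀ j : Fin (ts.get i).length, ∃ q : Fin s.length,
          f ⟨i, Sum.inl j⟩ = Sum.inl q ∧ q.val = a + j.val) ∨
        (∀ j : Fin (ts.get i).length, ∃ q : Fin s.length,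
          f ⟨i, Sum.inl j⟩ = Sum.inl q ∧ q.val = a + ((ts.get i).length - 1 - j.val))) := by
    intro i
    rcases Nat.lt_or_ge (ts.get i).length 2 with h1 | h2
    · have hl1 : (ts.get i).length = 1 := by have := hlen1 i; omega
      rcases hx : f ⟨i, Sum.inl ⟨0, hlen1 i⟩⟩ with p | a
      · refine ⟨p.val, by have := p.isLt; omega, ?_, by omega⟩
        intro k hk
        have hk0 : k = 0 := by omega
        subst hk0
        exact ⟨p, by omega, Sum.inl ⟨0, hlen1 i⟩, hx⟩
      · have hadj1 : (CatUnion ts).Adj ⟨i, Sum.inl ⟨0, hlen1 i⟩⟩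
            ⟨i, Sum.inr ⟨⟨0, hlen1 i⟩, hget0 i⟩⟩ :=
          hadj i _ _ (by simp) (by simp [catRel])
        have hE := hf _ _ hadj1
        rw [hx] at hE
        have hy := hcodr _ _ hE
        refine ⟨a.val.val, by have := a.val.isLt; omega, ?_, by omega⟩
        intro k hk
        have hk0 : k = 0 := by omega
        subst hk0
        exact ⟨a.val, by omega, Sum.inr ⟨⟨0, hlen1 i⟩, hget0 i⟩, hy⟩
    · set g : ℕ → ℕ :=
        fun k => if h : k < (ts.get i).length then (e i h2 ⟨k, h⟩).val else 0 with hg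
      have hgval : ∀ (k : ℕ) (hk : k < (ts.get i).length),
          g k = (e i h2 ⟨k, hk⟩).val := fun k hk => dif_pos hk
      have hginj : ∀ a < (ts.get i).length, ∀ b < (ts.get i).length, g a = g b → a = b := by
        intro a ha b hb hab
        rw [hgval a ha, hgval b hb] at hab
        have hee : e i h2 ⟨a, ha⟩ = e i h2 ⟨b, hb⟩ := Fin.ext hab
        have h3 : f ⟨i, Sum.inl ⟨a, ha⟩⟩ = f ⟨i, Sum.inl ⟨b, hb⟩⟩ := by
          rw [he i h2 ⟨a, ha⟩, he i h2 ⟨b, hb⟩, hee]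
        have := hinj' _ _ _ h3
        simpa [Fin.ext_iff] using this
      have hgstep : ∀ j, j + 1 < (ts.get i).length →
          g (j+1) = g j + 1 ∨ g j = g (j+1) + 1 := by
        intro j hj
        have := hstepadj i h2 ⟨j, by omega⟩ ⟨j+1, hj⟩ rfl
        rw [hgval (j+1) hj, hgval j (by omega)]
        exact this
      have h0len : 0 < (ts.get i).length := hlen1 i
      have hllen : (ts.get i).length - 1 < (ts.get i).length := by omega
      rcases cat_steps (ts.get i).length g hginj hgstep with hup | hdown
      · refine ⟨g 0, ?_, ?_, fun _ => Or.inl ?_⟩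
        · have hb := (e i h2 ⟨(ts.get i).length - 1, hllen⟩).isLt
          have h4 := hup ((ts.get i).length - 1) hllen
          rw [hgval _ hllen] at h4
          omega
        · intro k hk
          refine ⟨e i h2 ⟨k, hk⟩, ?_, Sum.inl ⟨k, hk⟩, he i h2 ⟨k, hk⟩⟩
          have h4 := hup k hk
          rw [hgval k hk] at h4
          omega
        · intro j
          refine ⟨e i h2 j, he i h2 j, ?_⟩
          have h4 := hup j.val j.isLt
          rw [hgval j.val j.isLt] at h4
          simp only [Fin.eta] at h4
          omega
      · refine ⟨g ((ts.get i).length - 1), ?_, ?_, fun _ => Or.inr ?_⟩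
        · have hb0 := (e i h2 ⟨0, h0len⟩).isLt
          have h40 := hgval 0 h0len
          have h4 := hdown ((ts.get i).length - 1) hllen
          rw [hgval _ hllen] at h4 ⊢
          omega
        · intro k hk
          have hk' : (ts.get i).length - 1 - k < (ts.get i).length := by omega
          refine ⟨e i h2 ⟨(ts.get i).length - 1 - k, hk'⟩, ?_,
            Sum.inl ⟨(ts.get i).length - 1 - k, hk'⟩, he i h2 _⟩
          have h4 := hdown ((ts.get i).length - 1 - k) hk'
          have h5 := hdown ((ts.get i).length - 1) hllen
          rw [hgval _ hk'] at h4
          rw [hgval _ hllen] at h5 ⊢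
          omega
        · intro j
          refine ⟨e i h2 j, he i h2 j, ?_⟩
          have h4 := hdown j.val j.isLt
          have h5 := hdown ((ts.get i).length - 1) hllen
          rw [hgval j.val j.isLt] at h4
          rw [hgval _ hllen] at h5 ⊢
          simp only [Fin.eta] at h4
          have := j.isLt
          omega
  choose A hA hhit hsp using perpiece
  have hsg : ∀ q : Fin s.length, s.get q = true → ∀ m : ℕ, m = q.val →
      s.getD m false = true := by
    intro q hq m hm
    subst hm
    rw [List.getD_eq_getElem?_getD, List.getElem?_eq_getElem q.isLt]
    simpa [List.get_eq_getElem] using hq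
  set Hs : Fin ts.length → Finset (Fin s.length) :=
    fun i => Finset.univ.filter (fun p => ∃ x : CatV (ts.get i), f ⟨i, x⟩ = Sum.inl p)
    with hHs
  have hmemHs : ∀ (i : Fin ts.length) (p : Fin s.length),
      p ∈ Hs i ↔ ∃ x : CatV (ts.get i), f ⟨i, x⟩ = Sum.inl p := by
    intro i p; simp [hHs]
  have hdisjH : ∀ i ∈ (Finset.univ : Finset (Fin ts.length)), ∀ j ∈ Finset.univ,
      i ≠ j → Disjoint (Hs i) (Hs j) := by
    intro i _ j _ hij
    rw [Finset.disjoint_left]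
    intro p hpi hpj
    obtain ⟨x, hx⟩ := (hmemHs i p).mp hpi
    obtain ⟨y, hy⟩ := (hmemHs j p).mp hpj
    exact hij (hinjI i j x y (hx.trans hy.symm))
  set Is : Fin ts.length → Finset (Fin s.length) :=
    fun i => Finset.univ.filter (fun p => A i ≤ p.val ∧ p.val < A i + (ts.get i).length)
    with hIs
  have hmemIs : ∀ (i : Fin ts.length) (p : Fin s.length),
      p ∈ Is i ↔ A i ≤ p.val ∧ p.val < A i + (ts.get i).length := by
    intro i p; simp [hIs]
  have hIsub : ∀ i, Is i ⊆ Hs i := by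
    intro i p hp
    rw [hmemIs] at hp
    obtain ⟨q, hqv, x, hx⟩ := hhit i (p.val - A i) (by omega)
    have : q = p := Fin.ext (by omega)
    subst this
    exact (hmemHs i _).mpr ⟨x, hx⟩
  have hALlt : ∀ i, A i < s.length := fun i => by have := hA i; have := hlen1 i; omega
  have hcardI : ∀ i, (ts.get i).length ≤ (Is i).card := by
    intro i
    have hc := Finset.card_le_card_of_injOn
      (s := Finset.range (ts.get i).length) (t := Is i)
      (fun k : ℕ => if h : A i + k < s.length then (⟨A i + k, h⟩ : Fin s.length)
        else ⟨A i, hALlt i⟩) ?_ ?_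
    · simpa using hc
    · intro k hk
      rw [Finset.mem_coe, Finset.mem_range] at hk
      have hlt : A i + k < s.length := by have := hA i; omega
      show (if h : A i + k < s.length then (⟨A i + k, h⟩ : Fin s.length)
        else ⟨A i, hALlt i⟩) ∈ Is i
      rw [dif_pos hlt, hmemIs]
      exact ⟨Nat.le_add_right _ _, Nat.add_lt_add_left hk _⟩
    · intro a ha b hb hab
      simp only [Finset.coe_range, Set.mem_Iio] at ha hb
      have hla : A i + a < s.length := by have := hA i; omega
      have hlb : A i + b < s.length := by have := hA i; omega
      have hab' : (if h : A i + a < s.length then (⟨A i + a, h⟩ : Fin s.length)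
          else ⟨A i, hALlt i⟩) = (if h : A i + b < s.length then (⟨A i + b, h⟩ : Fin s.length)
          else ⟨A i, hALlt i⟩) := hab
      rw [dif_pos hla, dif_pos hlb] at hab'
      have hv := congrArg Fin.val hab'
      simp only [Fin.val_mk] at hv
      omega
  have hsumlen : ∑ i : Fin ts.length, (ts.get i).length = s.length := by
    rw [← hlen]
    conv_rhs => rw [← List.ofFn_get ts]
    rw [List.map_ofFn, List.sum_ofFn]
    rfl
  have hcardH : ∀ i, (Hs i).card = (ts.get i).length := by
    have hle : ∀ i, (ts.get i).length ≤ (Hs i).card :=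
      fun i => le_trans (hcardI i) (Finset.card_le_card (hIsub i))
    have hsum2 : ∑ i : Fin ts.length, (Hs i).card ≤ s.length := by
      rw [← Finset.card_biUnion hdisjH]
      calc (Finset.univ.biUnion Hs).card ≤ (Finset.univ : Finset (Fin s.length)).card :=
            Finset.card_le_univ _
        _ = s.length := by simp
    by_contra hc
    push_neg at hc
    obtain ⟨i, hi⟩ := hc
    have hlt : ∑ i : Fin ts.length, (ts.get i).length < ∑ i : Fin ts.length, (Hs i).card :=
      Finset.sum_lt_sum (fun i _ => hle i)
        ⟨i, Finset.mem_univ i, lt_of_le_of_ne (hle i) (Ne.symm hi)⟩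
    omega
  have hIeq : ∀ i, Is i = Hs i := fun i =>
    Finset.eq_of_subset_of_card_le (hIsub i) (by rw [hcardH]; exact hcardI i)
  have hHb : ∀ (i : Fin ts.length) (p : Fin s.length),
      (∃ x : CatV (ts.get i), f ⟨i, x⟩ = Sum.inl p) →
      A i ≤ p.val ∧ p.val < A i + (ts.get i).length := by
    intro i p hx
    have hp : p ∈ Hs i := (hmemHs i p).mpr hx
    rw [← hIeq] at hp
    exact (hmemIs i p).mp hp
  have hcovP : ∀ p : Fin s.length, ∃ i, A i ≤ p.val ∧ p.val < A i + (ts.get i).length := by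
    intro p
    have huniv : Finset.univ.biUnion Hs = Finset.univ := by
      apply Finset.eq_univ_of_card
      rw [Finset.card_biUnion hdisjH]
      calc ∑ i, (Hs i).card = ∑ i : Fin ts.length, (ts.get i).length :=
            Finset.sum_congr rfl (fun i _ => hcardH i)
        _ = s.length := hsumlen
        _ = (Finset.univ : Finset (Fin s.length)).card := by simp
    have hp : p ∈ Finset.univ.biUnion Hs := by rw [huniv]; exact Finset.mem_univ p
    obtain ⟨i, _, hpi⟩ := Finset.mem_biUnion.mp hp
    rw [← hIeq] at hpi
    exact ⟨i, (hmemIs i p).mp hpi⟩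
  have hspineat : ∀ (i : Fin ts.length), 2 ≤ (ts.get i).length →
      ∀ k, k < (ts.get i).length →
      ∃ (j : Fin (ts.get i).length) (q : Fin s.length),
        f ⟨i, Sum.inl j⟩ = Sum.inl q ∧ q.val = A i + k := by
    intro i h2 k hk
    rcases hsp i h2 with hup | hdn
    · obtain ⟨q, hq, hqv⟩ := hup ⟨k, hk⟩
      exact ⟨⟨k, hk⟩, q, hq, hqv⟩
    · have hk' : (ts.get i).length - 1 - k < (ts.get i).length := by omega
      obtain ⟨q, hq, hqv⟩ := hdn ⟨(ts.get i).length - 1 - k, hk'⟩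
      exact ⟨_, q, hq, by simp only [Fin.val_mk] at hqv; omega⟩
  have hhairhair : ∀ (i : Fin ts.length), 2 ≤ (ts.get i).length →
      ∀ hh : {j : Fin (ts.get i).length // (ts.get i).get j = true},
      ∃ a : {q : Fin s.length // s.get q = true}, f ⟨i, Sum.inr hh⟩ = Sum.inr a := by
    intro i h2 hh
    rcases hx : f ⟨i, Sum.inr hh⟩ with p | a
    · exfalso
      have hb := hHb i p ⟨Sum.inr hh, hx⟩
      obtain ⟨j, q, hq, hqv⟩ := hspineat i h2 (p.val - A i) (by omega)
      have hqp : q = p := Fin.ext (by omega)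
      subst hqp
      have := hinj' _ _ _ (hq.trans hx.symm)
      simp at this
    · exact ⟨a, rfl⟩
  have hmarkP : ∀ (i : Fin ts.length) (k : ℕ), k < (ts.get i).length →
      (ts.get i).getD k false = true → s.getD (A i + k) false = true := by
    intro i k hk ht
    have hkg : (ts.get i).get ⟨k, hk⟩ = true := by
      rw [List.getD_eq_getElem?_getD, List.getElem?_eq_getElem hk] at ht
      simpa [List.get_eq_getElem] using ht
    rcases Nat.lt_or_ge (ts.get i).length 2 with h1 | h2
    · -- length-one piece
      have hl1 : (ts.get i).length = 1 := by have := hlen1 i; omega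
      have hk0 : k = 0 := by omega
      subst hk0
      have hadj1 : (CatUnion ts).Adj ⟨i, Sum.inl ⟨0, hlen1 i⟩⟩
          ⟨i, Sum.inr ⟨⟨0, hlen1 i⟩, hget0 i⟩⟩ := hadj i _ _ (by simp) (by simp [catRel])
      have hE := hf _ _ hadj1
      rcases hx : f ⟨i, Sum.inl ⟨0, hlen1 i⟩⟩ with p | a
      · rw [hx] at hE
        have hbp := hHb i p ⟨Sum.inl ⟨0, hlen1 i⟩, hx⟩
        rcases cat_adj_elim hE with ⟨p', q', hx', hy', hpq⟩ | ⟨hh', ⟨hx', hy'⟩ | ⟨hx', hy'⟩⟩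
        · exfalso
          have hbq := hHb i q' ⟨Sum.inr ⟨⟨0, hlen1 i⟩, hget0 i⟩, hy'⟩
          have hpp : p = p' := Sum.inl.inj hx'
          have hq'p : q' = p := Fin.ext (by omega)
          subst hq'p
          have := hinj' _ _ _ (hx.trans hy'.symm)
          simp at this
        · have hph : p = hh'.val := Sum.inl.inj hx'
          refine hsg _ hh'.prop _ ?_
          rw [← hph]
          omega
        · exfalso; simp at hx'
      · rw [hx] at hE
        have hy := hcodr _ _ hE
        have hb := hHb i a.val ⟨Sum.inr ⟨⟨0, hlen1 i⟩, hget0 i⟩, hy⟩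
        exact hsg _ a.prop _ (by omega)
    · -- long piece
      rcases hsp i h2 with hup | hdn
      · obtain ⟨q, hq, hqv⟩ := hup ⟨k, hk⟩
        obtain ⟨a, ha⟩ := hhairhair i h2 ⟨⟨k, hk⟩, hkg⟩
        have hadj1 : (CatUnion ts).Adj ⟨i, Sum.inl ⟨k, hk⟩⟩ ⟨i, Sum.inr ⟨⟨k, hk⟩, hkg⟩⟩ :=
          hadj i _ _ (by simp) (by simp [catRel])
        have hE := hf _ _ hadj1
        rw [hq, ha] at hE
        rcases cat_adj_elim hE with ⟨p', q', hx', hy', _⟩ | ⟨hh', ⟨hx', hy'⟩ | ⟨hx', hy'⟩⟩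
        · exfalso; simp at hy'
        · have hqh : q = hh'.val := Sum.inl.inj hx'
          refine hsg _ hh'.prop _ ?_
          rw [← hqh]
          simp only [Fin.val_mk] at hqv
          omega
        · exfalso; simp at hx'
      · have hjlt : (ts.get i).length - 1 - k < (ts.get i).length := by omega
        have hkg' : (ts.get i).get ⟨(ts.get i).length - 1 - k, hjlt⟩ = true := by
          have hpp := hpal _ (show ts.get i ∈ ts from List.get_mem ts i)
          rw [List.get_eq_getElem]
          have := pal_getElem hpp hjlt hk (by omega)
          rw [this]
          simpa [List.get_eq_getElem] using hkg
        obtain ⟨q, hq, hqv⟩ := hdn ⟨(ts.get i).length - 1 - k, hjlt⟩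
        obtain ⟨a, ha⟩ := hhairhair i h2 ⟨⟨(ts.get i).length - 1 - k, hjlt⟩, hkg'⟩
        have hadj1 : (CatUnion ts).Adj ⟨i, Sum.inl ⟨(ts.get i).length - 1 - k, hjlt⟩⟩
            ⟨i, Sum.inr ⟨⟨(ts.get i).length - 1 - k, hjlt⟩, hkg'⟩⟩ :=
          hadj i _ _ (by simp) (by simp [catRel])
        have hE := hf _ _ hadj1
        rw [hq, ha] at hE
        rcases cat_adj_elim hE with ⟨p', q', hx', hy', _⟩ | ⟨hh', ⟨hx', hy'⟩ | ⟨hx', hy'⟩⟩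
        · exfalso; simp at hy'
        · have hqh : q = hh'.val := Sum.inl.inj hx'
          refine hsg _ hh'.prop _ ?_
          rw [← hqh]
          simp only [Fin.val_mk] at hqv
          omega
        · exfalso; simp at hx'
  obtain ⟨u, hu1, hu2⟩ := scsol_aux ts.length ts le_rfl s A hlen
    (fun i => (hlen1 i).ne')
    (by
      intro i j p h1 h2 h3 h4
      have hpL : p < s.length := by have := hA i; omega
      obtain ⟨q, hqv, x, hx⟩ := hhit i (p - A i) (by omega)
      obtain ⟨q', hqv', y, hy⟩ := hhit j (p - A j) (by omega)
      have hqq : q = q' := Fin.ext (by omega)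
      subst hqq
      exact hinjI i j x y (hx.trans hy.symm))
    (by
      intro p hp
      obtain ⟨i, hcv1, hcv2⟩ := hcovP ⟨p, hp⟩
      exact ⟨i, hcv1, hcv2⟩)
    hmarkP
  exact ⟨u, hu1, hu2⟩
end

section
/- Let s be a binary string and t_1,…,t_n binary strings with Σ_{i=1}^n |t_i| = |s|, where each t_i is a palindrome whose first and last characters are 1. Then the disjoint union of the caterpillars C(t_1),…,C(t_n) is a minor of the caterpillar C(s) if and only if the String Crafting instance (s; t_1,…,t_n) has a solution (equivalently, if and only if the disjoint union is isomorphic to a subgraph of C(s)). -/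
/-- `H` is a minor of `G`: branch sets `B u` are nonempty, induce connected subgraphs of `G`,
are pairwise disjoint, and every edge of `H` is witnessed by an edge of `G` between the
corresponding branch sets. -/
def IsMinorOf {V W : Type} (H : SimpleGraph V) (G : SimpleGraph W) : Prop :=
  ∃ B : V → Set W,
    (∀ u, (B u).Nonempty) ∧
    (∀ u, (G.induce (B u)).Connected) ∧
    (∀ u v, u ≠ v → Disjoint (B u) (B v)) ∧
    (∀ u v, H.Adj u v → ∃ x ∈ B u, ∃ y ∈ B v, G.Adj x y)

/-- `P` is isomorphic to a subgraph of `G`. -/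
def IsSubgraphOf {V W : Type} (P : SimpleGraph V) (G : SimpleGraph W) : Prop :=
  ∃ f : V → W, Function.Injective f ∧ ∀ u v, P.Adj u v → G.Adj (f u) (f v)

namespace SCAux


lemma head_true {t : List Bool} (h : t.head? = some true) (h0 : 0 < t.length) :
    t.get ⟨0, h0⟩ = true := by
  cases t with
  | nil => simp at h0
  | cons a l => simpa using h

lemma last_true {t : List Bool} (h : t.getLast? = some true) (h0 : 0 < t.length) :
    t.get ⟨t.length - 1, by omega⟩ = true := by
  have hne : t ≠ [] := List.ne_nil_of_length_pos h0
  rw [List.getLast?_eq_getLast hne] at h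
  have h2 := List.getLast_eq_getElem hne
  simp only [Option.some.injEq] at h
  rw [List.get_eq_getElem]
  exact h2.symm.trans h

lemma getD_drop (s : List Bool) (m q : ℕ) :
    (s.drop m).getD q false = s.getD (m + q) false := by
  by_cases h : q < (s.drop m).length
  · rw [List.getD_eq_getElem _ _ h, List.getD_eq_getElem _ _ (by simp at h; omega)]
    exact List.getElem_drop
  · rw [List.getD_eq_default _ _ (by omega), List.getD_eq_default _ _ (by simp at h; omega)]

lemma chain_mono (k : ℕ) (f : ℕ → ℕ)
    (hinj : ∀ a, a < k → ∀ b, b < k → f a = f b → a = b)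
    (hstep : ∀ j, j + 1 < k → f (j + 1) = f j + 1 ∨ f j = f (j + 1) + 1) :
    (∀ j, j < k → f j = f 0 + j) ∨ (∀ j, j < k → f j + j = f 0) := by
  by_cases hk : k ≤ 1
  · left; intro j hj
    have : j = 0 := by omega
    subst this; simp
  push_neg at hk
  have h1 := hstep 0 (by omega)
  rw [show (0:ℕ)+1 = 1 from rfl] at h1
  rcases h1 with h1 | h1
  · left
    intro j
    induction j using Nat.strong_induction_on with
    | _ j ih =>
      match j with
      | 0 => intro _; simp
      | 1 => intro _; omega
      | (m+2) =>
        intro hj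
        have hm := ih m (by omega) (by omega)
        have hm1 := ih (m+1) (by omega) (by omega)
        have h2 := hstep (m+1) hj
        rw [show m+1+1 = m+2 from rfl] at h2
        rcases h2 with h2 | h2
        · omega
        · exfalso
          have : f (m+2) = f m := by omega
          have := hinj (m+2) hj m (by omega) this
          omega
  · right
    intro j
    induction j using Nat.strong_induction_on with
    | _ j ih =>
      match j with
      | 0 => intro _; simp
      | 1 => intro _; omega
      | (m+2) =>
        intro hj
        have hm := ih m (by omega) (by omega)
        have hm1 := ih (m+1) (by omega) (by omega)
        have h2 := hstep (m+1) hj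
        rw [show m+1+1 = m+2 from rfl] at h2
        rcases h2 with h2 | h2
        · exfalso
          have : f (m+2) = f m := by omega
          have := hinj (m+2) hj m (by omega) this
          omega
        · omega



def offFn (u : List (List Bool)) (i : ℕ) : ℕ := ((u.take i).map List.length).sum

lemma offFn_succ (u : List (List Bool)) (i : ℕ) (hi : i < u.length) :
    offFn u (i + 1) = offFn u i + u[i].length := by
  unfold offFn
  have h : u.take (i+1) = u.take i ++ [u[i]] := by
    rw [List.take_succ, List.getElem?_eq_getElem hi]; rfl
  rw [h, List.map_append, List.sum_append]; simp

lemma offFn_mono (u : List (List Bool)) {a b : ℕ} (h : a ≤ b) : offFn u a ≤ offFn u b := by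
  induction b with
  | zero =>
    have : a = 0 := by omega
    subst this; exact le_refl _
  | succ b ih =>
    rcases Nat.lt_or_ge b u.length with hb | hb
    · rcases Nat.eq_or_lt_of_le h with rfl | h'
      · exact le_refl _
      · exact le_trans (ih (by omega)) (by rw [offFn_succ u b hb]; omega)
    · have he : offFn u (b+1) = offFn u b := by
        unfold offFn
        rw [List.take_of_length_le (by omega), List.take_of_length_le hb]
      rcases Nat.eq_or_lt_of_le h with rfl | h'
      · exact le_refl _
      · rw [he]; exact ih (by omega)

lemma offFn_total (u : List (List Bool)) : offFn u u.length = (u.map List.length).sum := by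
  unfold offFn; rw [List.take_length]

lemma flat_getD (u : List (List Bool)) (i : ℕ) (hi : i < u.length) (j : ℕ)
    (hj : j < u[i].length) : u.flatten.getD (offFn u i + j) false = u[i].getD j false := by
  induction u generalizing i with
  | nil => simp at hi
  | cons a u' ih =>
    cases i with
    | zero =>
      have h0 : offFn (a :: u') 0 = 0 := by unfold offFn; simp
      rw [h0, List.flatten_cons, Nat.zero_add]
      simp only [List.getElem_cons_zero] at hj ⊢
      exact List.getD_append _ _ _ _ hj
    | succ i' =>
      have h1 : offFn (a :: u') (i' + 1) = a.length + offFn u' i' := by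
        unfold offFn; rw [List.take_succ_cons]; simp
      rw [h1, List.flatten_cons]
      rw [List.getD_append_right _ _ _ _ (by omega)]
      have : a.length + offFn u' i' + j - a.length = offFn u' i' + j := by omega
      rw [this]
      simp only [List.getElem_cons_succ] at hj ⊢
      exact ih i' (by simpa using hi) hj

lemma perm_exists_equiv {α : Type*} {l₁ l₂ : List α} (h : l₁.Perm l₂) :
    ∃ e : Fin l₁.length ≃ Fin l₂.length, ∀ i, l₁.get i = l₂.get (e i) := by
  induction h with
  | nil => exact ⟨Equiv.refl _, by intro i; exact absurd i.isLt (by simp)⟩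
  | cons x h ih =>
    obtain ⟨e, he⟩ := ih
    refine ⟨(finSuccEquiv _).trans ((Equiv.optionCongr e).trans (finSuccEquiv _).symm), ?_⟩
    intro i
    induction i using Fin.cases with
    | zero => simp
    | succ i' => simpa using he i'
  | swap x y l =>
    refine ⟨Equiv.swap ⟨0, by simp⟩ ⟨1, by simp⟩, ?_⟩
    intro i
    match i with
    | ⟨0, h⟩ => simp [Equiv.swap_apply_def, Fin.ext_iff, List.get_eq_getElem]
    | ⟨1, h⟩ => simp [Equiv.swap_apply_def, Fin.ext_iff, List.get_eq_getElem]
    | ⟨(m+2), h⟩ => simp [Equiv.swap_apply_def, Fin.ext_iff, List.get_eq_getElem]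
  | trans h1 h2 ih1 ih2 =>
    obtain ⟨e1, he1⟩ := ih1
    obtain ⟨e2, he2⟩ := ih2
    exact ⟨e1.trans e2, fun i => (he1 i).trans (he2 (e1 i))⟩

lemma sum_eraseIdx (ts : List (List Bool)) (i : Fin ts.length) :
    ((ts.eraseIdx i).map List.length).sum + (ts.get i).length = (ts.map List.length).sum := by
  rw [List.eraseIdx_eq_take_drop_succ]
  have h2 : (ts.map List.length).sum
      = ((ts.take i).map List.length).sum + ((ts.drop i).map List.length).sum := by
    rw [← List.sum_append, ← List.map_append, List.take_append_drop]
  have h3 : ts.drop i = ts[i] :: ts.drop (i+1) := List.drop_eq_getElem_cons i.isLt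
  rw [h2, h3, List.map_append, List.sum_append, List.map_cons, List.sum_cons,
    List.get_eq_getElem]
  simp only [Fin.getElem_fin]
  omega


lemma assemble : ∀ (N : ℕ) (ts : List (List Bool)) (s : List Bool)
    (α : Fin ts.length → ℕ),
    ts.length = N →
    (ts.map List.length).sum = s.length →
    (∀ i, 1 ≤ (ts.get i).length) →
    (∀ p, p < s.length → ∃ i, α i ≤ p ∧ p < α i + (ts.get i).length) →
    (∀ i i' : Fin ts.length, i ≠ i' → ∀ p, α i ≤ p → p < α i + (ts.get i).length →
      ¬(α i' ≤ p ∧ p < α i' + (ts.get i').length)) →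
    (∀ i, ∀ j, j < (ts.get i).length →
      ((ts.get i).getD j false = true → s.getD (α i + j) false = true)) →
    ∃ u : List (List Bool), u.Perm ts ∧
      ∀ p : ℕ, u.flatten.getD p false = true → s.getD p false = true := by
  intro N
  induction N with
  | zero =>
    intro ts s α hN _ _ _ _ _
    have : ts = [] := List.length_eq_zero_iff.mp hN
    subst this
    refine ⟨[], List.Perm.refl _, ?_⟩
    intro p hp
    rw [List.flatten_nil, List.getD_eq_default _ _ (by simp)] at hp
    exact absurd hp (by simp)
  | succ N ih =>
    intro ts s α hN hsum hpos hcov hdisj hcond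
    have hn1 : 0 < ts.length := by omega
    have hslen : 0 < s.length := by
      rw [← hsum]
      have h1 := sum_eraseIdx ts ⟨0, hn1⟩
      have h2 := hpos ⟨0, hn1⟩
      omega
    obtain ⟨i0, hi0le, hi0lt⟩ := hcov 0 hslen
    have hα0 : α i0 = 0 := by omega
    set k0 := (ts.get i0).length with hk0
    have hge : ∀ i, i ≠ i0 → k0 ≤ α i := by
      intro i hi
      by_contra hlt
      push_neg at hlt
      exact hdisj i i0 hi (α i) (le_refl _) (by have := hpos i; omega) (by omega)
    set ts' := ts.eraseIdx i0 with hts'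
    set s' := s.drop k0 with hs'
    have hlen2 : ts'.length = ts.length - 1 := by
      rw [hts', List.length_eraseIdx]
      simp [i0.isLt]
    have hlen' : ts'.length = N := by omega
    have hemb : ∀ i' : Fin ts'.length, ∃ i : Fin ts.length, i ≠ i0 ∧
        ts'.get i' = ts.get i ∧
        ((i'.val < i0.val ∧ i.val = i'.val) ∨ (¬ i'.val < i0.val ∧ i.val = i'.val + 1)) := by
      intro i'
      have hlt : i'.val < ts.length - 1 := by
        have := i'.isLt
        omega
      by_cases hc : i'.val < i0.val
      · refine ⟨⟨i'.val, by omega⟩, ?_, ?_, Or.inl ⟨hc, rfl⟩⟩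
        · intro h
          rw [Fin.ext_iff] at h
          simp at h
          omega
        · rw [List.get_eq_getElem, List.get_eq_getElem]
          simp only [hts']
          rw [List.getElem_eraseIdx]
          simp [hc]
      · refine ⟨⟨i'.val + 1, by omega⟩, ?_, ?_, Or.inr ⟨hc, rfl⟩⟩
        · intro h
          rw [Fin.ext_iff] at h
          simp at h
          omega
        · rw [List.get_eq_getElem, List.get_eq_getElem]
          simp only [hts']
          rw [List.getElem_eraseIdx]
          simp [hc]
    choose emb hembne hembget hembval using hemb
    have hembinj : Function.Injective emb := by
      intro a b hab
      rcases hembval a with ⟨_, ha⟩ | ⟨_, ha⟩ <;> rcases hembval b with ⟨_, hb⟩ | ⟨_, hb⟩ <;>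
        (rw [Fin.ext_iff] at hab ⊢; omega)
    set α' : Fin ts'.length → ℕ := fun i' => α (emb i') - k0 with hα'
    have hsum' : (ts'.map List.length).sum = s'.length := by
      have h1 := sum_eraseIdx ts i0
      rw [← hts'] at h1
      rw [hs', List.length_drop]
      omega
    have hpos' : ∀ i', 1 ≤ (ts'.get i').length := by
      intro i'; rw [hembget i']; exact hpos _
    have hcov' : ∀ p, p < s'.length → ∃ i', α' i' ≤ p ∧ p < α' i' + (ts'.get i').length := by
      intro p hp
      rw [hs', List.length_drop] at hp
      obtain ⟨i, hle, hlt⟩ := hcov (p + k0) (by omega)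
      have hii0 : i ≠ i0 := by
        intro h
        subst h
        omega
      have hex : ∃ i', emb i' = i := by
        by_cases hc : i.val < i0.val
        · refine ⟨⟨i.val, by omega⟩, ?_⟩
          rcases hembval ⟨i.val, by omega⟩ with ⟨_, hv⟩ | ⟨hv, _⟩
          · simp at hv; rw [Fin.ext_iff]; omega
          · simp at hv; omega
        · have hgt : i0.val < i.val := by
            rcases Nat.lt_or_ge i0.val i.val with h | h
            · exact h
            · exfalso; apply hii0; rw [Fin.ext_iff]; omega
          refine ⟨⟨i.val - 1, by omega⟩, ?_⟩
          rcases hembval ⟨i.val - 1, by omega⟩ with ⟨hv, _⟩ | ⟨_, hv⟩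
          · simp at hv; omega
          · simp at hv; rw [Fin.ext_iff]; omega
      obtain ⟨i', rfl⟩ := hex
      have hge' := hge _ (hembne i')
      refine ⟨i', ?_, ?_⟩
      · simp only [hα']; omega
      · simp only [hα']
        rw [hembget i']
        omega
    have hdisj' : ∀ i' j' : Fin ts'.length, i' ≠ j' → ∀ p, α' i' ≤ p →
        p < α' i' + (ts'.get i').length →
        ¬(α' j' ≤ p ∧ p < α' j' + (ts'.get j').length) := by
      rintro i' j' hne p hle hlt ⟨hle2, hlt2⟩
      have h1 := hge _ (hembne i')
      have h2 := hge _ (hembne j')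
      rw [hembget i'] at hlt
      rw [hembget j'] at hlt2
      simp only [hα'] at hle hlt hle2 hlt2
      exact hdisj (emb i') (emb j') (fun h => hne (hembinj h)) (p + k0)
        (by omega) (by omega) ⟨by omega, by omega⟩
    have hcond' : ∀ i', ∀ j, j < (ts'.get i').length →
        ((ts'.get i').getD j false = true → s'.getD (α' i' + j) false = true) := by
      intro i' j hj ht
      rw [hembget i'] at hj ht
      have h1 := hge _ (hembne i')
      have h2 := hcond (emb i') j hj ht
      rw [hs', getD_drop]
      simp only [hα']
      have heq : k0 + (α (emb i') - k0 + j) = α (emb i') + j := by omega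
      rw [heq]
      exact h2
    obtain ⟨u', hperm', hcond''⟩ := ih ts' s' α' hlen' hsum' hpos' hcov' hdisj' hcond'
    refine ⟨ts.get i0 :: u', ?_, ?_⟩
    · have hP : ts.Perm (ts.get i0 :: ts') := by
        have h1 : ts = ts.take i0 ++ ts.get i0 :: ts.drop (i0 + 1) := by
          rw [List.get_eq_getElem, ← List.drop_eq_getElem_cons i0.isLt, List.take_append_drop]
        rw [hts', List.eraseIdx_eq_take_drop_succ]
        conv_lhs => rw [h1]
        exact List.perm_middle
      exact (hperm'.cons _).trans hP.symm
    · intro p hp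
      rw [List.flatten_cons] at hp
      by_cases hpk : p < k0
      · rw [List.getD_append _ _ _ _ (by rw [hk0] at hpk; exact hpk)] at hp
        have := hcond i0 p (by omega) hp
        rw [hα0, Nat.zero_add] at this
        exact this
      · rw [List.getD_append_right _ _ _ _ (by omega)] at hp
        have heq : p - (ts.get i0).length = p - k0 := by omega
        rw [heq] at hp
        have := hcond'' (p - k0) hp
        rw [hs', getD_drop] at this
        have heq2 : k0 + (p - k0) = p := by omega
        rw [heq2] at this
        exact this



lemma minor_of_sub {V W : Type} {H : SimpleGraph V} {G : SimpleGraph W}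
    (h : IsSubgraphOf H G) : IsMinorOf H G := by
  obtain ⟨f, hinj, hadj⟩ := h
  refine ⟨fun u => {f u}, fun u => ⟨f u, rfl⟩, ?_, ?_, ?_⟩
  · intro u
    haveI : Nonempty ((fun u => ({f u} : Set W)) u) := ⟨⟨f u, rfl⟩⟩
    constructor
    intro a b
    have : a = b := by
      ext
      exact (a.2 : _ ∈ ({f u} : Set W)).trans ((b.2 : _ ∈ ({f u} : Set W)).symm)
    rw [this]
  · intro u v huv
    simp only [Set.disjoint_singleton_left, Set.mem_singleton_iff]
    exact fun h => huv (hinj h)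
  · intro u v huv
    exact ⟨f u, rfl, f v, rfl, hadj u v huv⟩

-- basic caterpillar adjacency facts
lemma adj_hair {s : List Bool} {x : CatV s} {h : {i : Fin s.length // s.get i = true}}
    (ha : (Cat s).Adj x (Sum.inr h)) : x = Sum.inl h.1 := by
  rcases (SimpleGraph.fromRel_adj _ _ _).mp ha with ⟨-, hr | hr⟩
  · cases x with
    | inl i => exact congrArg Sum.inl (Fin.ext hr)
    | inr h' => exact hr.elim
  · exact hr.elim

lemma hairs_no_adj {s : List Bool} {h h' : {i : Fin s.length // s.get i = true}} :
    ¬ (Cat s).Adj (Sum.inr h) (Sum.inr h') := by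
  intro ha
  rcases (SimpleGraph.fromRel_adj _ _ _).mp ha with ⟨-, hr | hr⟩ <;> exact hr.elim

lemma hairs_only_subsingleton {s : List Bool} {A : Set (CatV s)}
    (hc : ((Cat s).induce A).Connected)
    (hh : ∀ x ∈ A, ∃ h, x = Sum.inr h) :
    ∀ x ∈ A, ∀ y ∈ A, x = y := by
  intro x hx y hy
  by_contra hne
  obtain ⟨w⟩ := hc.preconnected ⟨x, hx⟩ ⟨y, hy⟩
  have hnn : ¬ w.Nil := SimpleGraph.Walk.not_nil_of_ne (by simp [Subtype.ext_iff]; exact hne)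
  have hadj := SimpleGraph.Walk.adj_snd hnn
  have h2 : (Cat s).Adj x ((w.getVert 1) : CatV s) := by simpa using hadj
  obtain ⟨hx', rfl⟩ := hh x hx
  obtain ⟨hy', hy'e⟩ := hh _ (w.getVert 1).2
  rw [hy'e] at h2
  exact hairs_no_adj h2

lemma hair_anchor {s : List Bool} {A : Set (CatV s)}
    (hc : ((Cat s).induce A).Connected)
    {h : {i : Fin s.length // s.get i = true}} (hmem : Sum.inr h ∈ A)
    {x : CatV s} (hx : x ∈ A) (hne : x ≠ Sum.inr h) :
    Sum.inl h.1 ∈ A := by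
  obtain ⟨w⟩ := hc.preconnected ⟨Sum.inr h, hmem⟩ ⟨x, hx⟩
  have hnn : ¬ w.Nil := SimpleGraph.Walk.not_nil_of_ne
    (by simp [Subtype.ext_iff]; exact fun hh => hne hh.symm)
  have hadj := SimpleGraph.Walk.adj_snd hnn
  have h2 : (Cat s).Adj (Sum.inr h) ((w.getVert 1) : CatV s) := by simpa using hadj
  have h3 := adj_hair h2.symm
  rw [← h3]
  exact (w.getVert 1).2

-- CatUnion adjacency
lemma union_adj_elim {ts : List (List Bool)} {a b : Σ i : Fin ts.length, CatV (ts.get i)}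
    (h : (CatUnion ts).Adj a b) :
    a ≠ b ∧ a.1 = b.1 ∧
      (catRel (ts.get a.1) (ts.get b.1) a.2 b.2 ∨ catRel (ts.get b.1) (ts.get a.1) b.2 a.2) := by
  rcases (SimpleGraph.fromRel_adj _ _ _).mp h with ⟨hne, ⟨he, hr⟩ | ⟨he, hr⟩⟩
  · exact ⟨hne, he, Or.inl hr⟩
  · exact ⟨hne, he.symm, Or.inr hr⟩

lemma union_adj_spine_hair {ts : List (List Bool)} (i : Fin ts.length)
    (j : Fin (ts.get i).length) (hj : (ts.get i).get j = true) :
    (CatUnion ts).Adj ⟨i, Sum.inl j⟩ ⟨i, Sum.inr ⟨j, hj⟩⟩ := by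
  rw [CatUnion, SimpleGraph.fromRel_adj]
  refine ⟨?_, Or.inl ⟨rfl, rfl⟩⟩
  intro h
  rw [Sigma.ext_iff] at h
  simp only [heq_eq_eq] at h
  exact absurd h.2 (by simp)

lemma union_adj_spine_spine {ts : List (List Bool)} (i : Fin ts.length)
    {j j' : Fin (ts.get i).length} (h : j.val + 1 = j'.val) :
    (CatUnion ts).Adj ⟨i, Sum.inl j⟩ ⟨i, Sum.inl j'⟩ := by
  rw [CatUnion, SimpleGraph.fromRel_adj]
  refine ⟨?_, Or.inl ⟨rfl, h⟩⟩
  intro hh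
  rw [Sigma.ext_iff] at hh
  simp only [heq_eq_eq, Sum.inl.injEq, Fin.ext_iff] at hh
  omega


def castCat {t t' : List Bool} (h : t = t') : CatV t → CatV t'
  | Sum.inl j => Sum.inl (Fin.cast (by rw [h]) j)
  | Sum.inr hh => Sum.inr ⟨Fin.cast (by rw [h]) hh.1, by subst h; exact hh.2⟩

lemma castCat_rfl {t : List Bool} (x : CatV t) : castCat rfl x = x := by
  cases x <;> rfl

lemma castCat_inj {t t' : List Bool} (h : t = t') : Function.Injective (castCat h) := by
  subst h
  intro x y hxy
  rwa [castCat_rfl, castCat_rfl] at hxy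

lemma castCat_rel {t t' : List Bool} (h : t = t') (x y : CatV t) (hr : catRel t t x y) :
    catRel t' t' (castCat h x) (castCat h y) := by
  subst h
  rwa [castCat_rfl, castCat_rfl]

def buildF (s : List Bool) (u : List (List Bool))
    (hbound : ∀ (i : Fin u.length) (j : ℕ), j < (u.get i).length → offFn u i.val + j < s.length)
    (htrue : ∀ (i : Fin u.length) (j : Fin (u.get i).length), (u.get i).get j = true →
      s.get ⟨offFn u i.val + j.val, hbound i j.val j.isLt⟩ = true) :
    (Σ i : Fin u.length, CatV (u.get i)) → CatV s
  | ⟨i, Sum.inl j⟩ => Sum.inl ⟨offFn u i.val + j.val, hbound i j.val j.isLt⟩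
  | ⟨i, Sum.inr hh⟩ => Sum.inr ⟨⟨offFn u i.val + hh.1.val, hbound i hh.1.val hh.1.isLt⟩,
      htrue i hh.1 hh.2⟩

lemma sub_of_sol (s : List Bool) (ts : List (List Bool))
    (hlen : (ts.map List.length).sum = s.length)
    (h : SCSol s ts) : IsSubgraphOf (CatUnion ts) (Cat s) := by
  obtain ⟨u, hperm, hcond⟩ := h
  obtain ⟨e, he⟩ := perm_exists_equiv hperm.symm
  have husum : (u.map List.length).sum = s.length := by
    rw [List.Perm.sum_eq (hperm.map List.length)]
    exact hlen
  have hbound : ∀ (i : Fin u.length) (j : ℕ), j < (u.get i).length →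
      offFn u i.val + j < s.length := by
    intro i j hj
    have h1 := offFn_succ u i.val i.isLt
    have h2 := offFn_mono u (show i.val + 1 ≤ u.length from i.isLt)
    rw [offFn_total, husum] at h2
    rw [List.get_eq_getElem] at hj
    omega
  have htrue : ∀ (i : Fin u.length) (j : Fin (u.get i).length), (u.get i).get j = true →
      s.get ⟨offFn u i.val + j.val, hbound i j.val j.isLt⟩ = true := by
    intro i j hj
    have hj' : j.val < u[i.val].length := by
      rw [← List.get_eq_getElem]; exact j.isLt
    have h1 : u.flatten.getD (offFn u i.val + j.val) false = true := by
      rw [flat_getD u i.val i.isLt j.val hj']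
      rw [List.getD_eq_getElem _ _ hj', ← List.get_eq_getElem]
      exact hj
    have h2 := hcond _ h1
    rw [List.getD_eq_getElem _ _ (hbound i j.val j.isLt)] at h2
    rw [List.get_eq_getElem]
    exact h2
  have hoff : ∀ (i i' : Fin u.length) (j j' : ℕ), j < (u.get i).length →
      j' < (u.get i').length →
      offFn u i.val + j = offFn u i'.val + j' → i = i' ∧ j = j' := by
    intro i i' j j' hj hj' heq
    rw [List.get_eq_getElem] at hj hj'
    rcases lt_trichotomy i.val i'.val with hlt | heqv | hgt
    · exfalso
      have h1 := offFn_succ u i.val i.isLt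
      have h2 := offFn_mono u (show i.val + 1 ≤ i'.val from hlt)
      omega
    · have : offFn u i.val = offFn u i'.val := by rw [heqv]
      exact ⟨Fin.ext heqv, by omega⟩
    · exfalso
      have h1 := offFn_succ u i'.val i'.isLt
      have h2 := offFn_mono u (show i'.val + 1 ≤ i.val from hgt)
      omega
  set F := buildF s u hbound htrue with hF
  have hFinj : Function.Injective F := by
    rintro ⟨i, x⟩ ⟨i', y⟩ hab
    cases x with
    | inl j =>
      cases y with
      | inl j' =>
        simp only [hF, buildF, Sum.inl.injEq, Fin.ext_iff] at hab
        obtain ⟨h1, h2⟩ := hoff i i' j.val j'.val j.isLt j'.isLt hab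
        subst h1
        have : j = j' := Fin.ext h2
        subst this
        rfl
      | inr hh' =>
        simp only [hF, buildF] at hab
        exact absurd hab (by simp)
    | inr hh =>
      cases y with
      | inl j' =>
        simp only [hF, buildF] at hab
        exact absurd hab (by simp)
      | inr hh' =>
        simp only [hF, buildF, Sum.inr.injEq, Subtype.ext_iff, Fin.ext_iff] at hab
        obtain ⟨h1, h2⟩ := hoff i i' hh.1.val hh'.1.val hh.1.isLt hh'.1.isLt hab
        subst h1
        have h3 : hh = hh' := Subtype.ext (Fin.ext h2)
        subst h3
        rfl
  have hFadj : ∀ (i : Fin u.length) (x y : CatV (u.get i)), x ≠ y →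
      (catRel (u.get i) (u.get i) x y ∨ catRel (u.get i) (u.get i) y x) →
      (Cat s).Adj (F ⟨i, x⟩) (F ⟨i, y⟩) := by
    intro i x y hne hrel
    rw [Cat, SimpleGraph.fromRel_adj]
    constructor
    · intro hcontra
      apply hne
      have h1 := hFinj hcontra
      rw [Sigma.ext_iff] at h1
      simpa only [heq_eq_eq] using h1.2
    · rcases hrel with hr | hr
      · left
        cases x with
        | inl j =>
          cases y with
          | inl j' =>
            have hr' : j.val + 1 = j'.val := hr
            show offFn u i.val + j.val + 1 = offFn u i.val + j'.val
            omega
          | inr hh' =>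
            have hr' : j.val = hh'.1.val := hr
            show offFn u i.val + j.val = offFn u i.val + hh'.1.val
            omega
        | inr hh => exact hr.elim
      · right
        cases y with
        | inl j' =>
          cases x with
          | inl j =>
            have hr' : j'.val + 1 = j.val := hr
            show offFn u i.val + j'.val + 1 = offFn u i.val + j.val
            omega
          | inr hh =>
            have hr' : j'.val = hh.1.val := hr
            show offFn u i.val + j'.val = offFn u i.val + hh.1.val
            omega
        | inr hh' => exact hr.elim
  refine ⟨fun a => F ⟨e a.1, castCat (he a.1) a.2⟩, ?_, ?_⟩
  · rintro ⟨i, x⟩ ⟨i', y⟩ hab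
    have h1 := hFinj hab
    rw [Sigma.ext_iff] at h1
    obtain ⟨h2, h3⟩ := h1
    have h4 : i = i' := e.injective (Fin.ext (by rw [Fin.ext_iff] at h2; exact h2))
    subst h4
    simp only [heq_eq_eq] at h3
    have h5 := castCat_inj (he i) h3
    rw [h5]
  · rintro ⟨i, x⟩ ⟨i', y⟩ hadj
    rcases (SimpleGraph.fromRel_adj _ _ _).mp hadj with ⟨hne, ⟨heq1, hr⟩ | ⟨heq1, hr⟩⟩
    · dsimp only at heq1 hr
      subst heq1
      apply hFadj
      · intro hcontra
        apply hne
        have h9 := castCat_inj (he _) hcontra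
        dsimp only at h9
        rw [h9]
      · exact Or.inl (castCat_rel (he _) x y hr)
    · dsimp only at heq1 hr
      subst heq1
      apply hFadj
      · intro hcontra
        apply hne
        have h9 := castCat_inj (he _) hcontra
        dsimp only at h9
        rw [h9]
      · exact Or.inr (castCat_rel (he _) y x hr)


-- new helpers
def posOf {s : List Bool} : CatV s → Fin s.length
  | Sum.inl p => p
  | Sum.inr hh => hh.1

lemma sigma_spine_ne_hair {ts : List (List Bool)} {i i' : Fin ts.length}
    (j : Fin (ts.get i).length)
    (h' : {x : Fin (ts.get i').length // (ts.get i').get x = true}) :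
    (⟨i, Sum.inl j⟩ : Σ i : Fin ts.length, CatV (ts.get i)) ≠ ⟨i', Sum.inr h'⟩ := by
  intro h
  rw [Sigma.ext_iff] at h
  obtain ⟨h1, h2⟩ := h
  dsimp only at h1
  subst h1
  rw [heq_eq_eq] at h2
  exact absurd h2 (by simp)

lemma sigma_spine_inj {ts : List (List Bool)} {i i' : Fin ts.length}
    {j : Fin (ts.get i).length} {j' : Fin (ts.get i').length}
    (h : (⟨i, Sum.inl j⟩ : Σ i : Fin ts.length, CatV (ts.get i)) = ⟨i', Sum.inl j'⟩) :
    (⟨i, j⟩ : Σ i : Fin ts.length, Fin (ts.get i).length) = ⟨i', j'⟩ := by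
  rw [Sigma.ext_iff] at h ⊢
  obtain ⟨h1, h2⟩ := h
  dsimp only at h1 ⊢
  subst h1
  rw [heq_eq_eq] at h2
  exact ⟨rfl, heq_of_eq (Sum.inl.inj h2)⟩

lemma sigma_hair_inj {ts : List (List Bool)} {i i' : Fin ts.length}
    {j : Fin (ts.get i).length} {j' : Fin (ts.get i').length}
    {hj : (ts.get i).get j = true} {hj' : (ts.get i').get j' = true}
    (h : (⟨i, Sum.inr ⟨j, hj⟩⟩ : Σ i : Fin ts.length, CatV (ts.get i)) = ⟨i', Sum.inr ⟨j', hj'⟩⟩) :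
    (⟨i, j⟩ : Σ i : Fin ts.length, Fin (ts.get i).length) = ⟨i', j'⟩ := by
  rw [Sigma.ext_iff] at h ⊢
  obtain ⟨h1, h2⟩ := h
  dsimp only at h1 ⊢
  subst h1
  rw [heq_eq_eq] at h2
  have := Sum.inr.inj h2
  have h4 : j = j' := congrArg Subtype.val this
  exact ⟨rfl, heq_of_eq h4⟩

lemma sigma_T_inj {ts : List (List Bool)} {i : Fin ts.length}
    {j j' : Fin (ts.get i).length}
    (h : (⟨i, j⟩ : Σ i : Fin ts.length, Fin (ts.get i).length) = ⟨i, j'⟩) : j = j' := by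
  rw [Sigma.ext_iff] at h
  obtain ⟨-, h2⟩ := h
  rwa [heq_eq_eq] at h2

lemma sol_of_minor (s : List Bool) (ts : List (List Bool))
    (hlen : (ts.map List.length).sum = s.length)
    (hpal : ∀ t ∈ ts, t.reverse = t)
    (hhead : ∀ t ∈ ts, t.head? = some true)
    (hlast : ∀ t ∈ ts, t.getLast? = some true)
    (hm : IsMinorOf (CatUnion ts) (Cat s)) : SCSol s ts := by
  classical
  obtain ⟨B, hne, hconn, hdisjB, hedge⟩ := hm
  have hmemts : ∀ i : Fin ts.length, ts.get i ∈ ts := fun i => List.get_mem ts i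
  have hpos : ∀ i : Fin ts.length, 0 < (ts.get i).length := by
    intro i
    have := hhead _ (hmemts i)
    cases h : ts.get i with
    | nil => rw [h] at this; simp at this
    | cons a l => simp
  have hget0 : ∀ (i : Fin ts.length) (h0 : 0 < (ts.get i).length),
      (ts.get i).get ⟨0, h0⟩ = true := fun i h0 => head_true (hhead _ (hmemts i)) h0
  have hgetlast : ∀ (i : Fin ts.length) (h0 : 0 < (ts.get i).length),
      (ts.get i).get ⟨(ts.get i).length - 1, by omega⟩ = true :=
    fun i h0 => last_true (hlast _ (hmemts i)) h0
  -- NOSPINE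
  have nospine : ∀ (i : Fin ts.length) (j : Fin (ts.get i).length),
      (∀ q : Fin s.length, Sum.inl q ∉ B ⟨i, Sum.inl j⟩) →
      ∃ (p : Fin s.length) (hp : s.get p = true),
        (∀ y ∈ B ⟨i, Sum.inl j⟩, y = Sum.inr ⟨p, hp⟩) ∧
        Sum.inr (⟨p, hp⟩ : {x : Fin s.length // s.get x = true}) ∈ B ⟨i, Sum.inl j⟩ ∧
        (∀ u', (CatUnion ts).Adj ⟨i, Sum.inl j⟩ u' → Sum.inl p ∈ B u') ∧
        (ts.get i).length = 1 := by
    intro i j hq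
    obtain ⟨x, hx⟩ := hne ⟨i, Sum.inl j⟩
    have hhair : ∀ y ∈ B ⟨i, Sum.inl j⟩, ∃ h, y = Sum.inr h := by
      intro y hy
      cases y with
      | inl q => exact absurd hy (hq q)
      | inr hh => exact ⟨hh, rfl⟩
    obtain ⟨hx0, rfl⟩ := hhair x hx
    have hsing : ∀ y ∈ B ⟨i, Sum.inl j⟩, y = Sum.inr ⟨hx0.1, hx0.2⟩ := by
      intro y hy
      exact hairs_only_subsingleton (hconn _) hhair y hy _ hx
    have hnb : ∀ u', (CatUnion ts).Adj ⟨i, Sum.inl j⟩ u' → Sum.inl hx0.1 ∈ B u' := by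
      intro u' hadj
      obtain ⟨x', hx', y', hy', hxy⟩ := hedge _ _ hadj
      have hx'e := hsing x' hx'
      rw [hx'e] at hxy
      have := adj_hair hxy.symm
      rw [← this]
      exact hy'
    refine ⟨hx0.1, hx0.2, hsing, hx, hnb, ?_⟩
    by_contra hlen1
    have hlen2 : 2 ≤ (ts.get i).length := by have := j.isLt; omega
    have key : ∀ u1 u2 : Σ i : Fin ts.length, CatV (ts.get i), u1 ≠ u2 →
        (CatUnion ts).Adj ⟨i, Sum.inl j⟩ u1 → (CatUnion ts).Adj ⟨i, Sum.inl j⟩ u2 → False := by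
      intro u1 u2 hne12 h1 h2
      exact Set.disjoint_left.mp (hdisjB u1 u2 hne12) (hnb u1 h1) (hnb u2 h2)
    by_cases hj0 : j.val = 0
    · have hjeq : j = ⟨0, by omega⟩ := Fin.ext hj0
      have hjt : (ts.get i).get j = true := by rw [hjeq]; exact hget0 i (by omega)
      refine key ⟨i, Sum.inl ⟨1, by omega⟩⟩ ⟨i, Sum.inr ⟨j, hjt⟩⟩ ?_ ?_ ?_
      · exact sigma_spine_ne_hair _ _
      · exact union_adj_spine_spine i (show j.val + 1 = 1 by omega)
      · exact union_adj_spine_hair i j hjt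
    · by_cases hjl : j.val = (ts.get i).length - 1
      · have hjeq : j = ⟨(ts.get i).length - 1, by omega⟩ := Fin.ext hjl
        have hjt : (ts.get i).get j = true := by rw [hjeq]; exact hgetlast i (by omega)
        refine key ⟨i, Sum.inl ⟨j.val - 1, by omega⟩⟩ ⟨i, Sum.inr ⟨j, hjt⟩⟩ ?_ ?_ ?_
        · exact sigma_spine_ne_hair _ _
        · exact (union_adj_spine_spine i (show (j.val - 1) + 1 = j.val by omega)).symm
        · exact union_adj_spine_hair i j hjt
      · refine key ⟨i, Sum.inl ⟨j.val - 1, by omega⟩⟩ ⟨i, Sum.inl ⟨j.val + 1, by omega⟩⟩ ?_ ?_ ?_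
        · intro hcontra
          have := sigma_T_inj (sigma_spine_inj hcontra)
          rw [Fin.ext_iff] at this
          have h6 : j.val - 1 = j.val + 1 := this
          omega
        · exact (union_adj_spine_spine i (show (j.val - 1) + 1 = j.val by omega)).symm
        · exact union_adj_spine_spine i (show j.val + 1 = j.val + 1 from rfl)
  -- the W family
  let W : (Σ i : Fin ts.length, Fin (ts.get i).length) → Finset (Fin s.length) := fun u =>
    Finset.univ.filter (fun p =>
      Sum.inl p ∈ B ⟨u.1, Sum.inl u.2⟩ ∨
      ((∀ q : Fin s.length, Sum.inl q ∉ B ⟨u.1, Sum.inl u.2⟩) ∧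
        ∃ hp : s.get p = true, Sum.inr ⟨p, hp⟩ ∈ B ⟨u.1, Sum.inl u.2⟩))
  have memW : ∀ (u : Σ i : Fin ts.length, Fin (ts.get i).length) (p : Fin s.length),
      p ∈ W u ↔ (Sum.inl p ∈ B ⟨u.1, Sum.inl u.2⟩ ∨
      ((∀ q : Fin s.length, Sum.inl q ∉ B ⟨u.1, Sum.inl u.2⟩) ∧
        ∃ hp : s.get p = true, Sum.inr ⟨p, hp⟩ ∈ B ⟨u.1, Sum.inl u.2⟩)) := by
    intro u p
    simp only [W, Finset.mem_filter, Finset.mem_univ, true_and]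
  have Wne : ∀ u, (W u).Nonempty := by
    intro u
    by_cases hsp : ∃ q : Fin s.length, Sum.inl q ∈ B ⟨u.1, Sum.inl u.2⟩
    · obtain ⟨q, hq⟩ := hsp
      exact ⟨q, (memW u q).mpr (Or.inl hq)⟩
    · push_neg at hsp
      obtain ⟨p, hp, hsing, hmem, -, -⟩ := nospine u.1 u.2 hsp
      exact ⟨p, (memW u p).mpr (Or.inr ⟨hsp, hp, hmem⟩)⟩
  have hairpos : ∀ (u : Σ i : Fin ts.length, Fin (ts.get i).length),
      (ts.get u.1).length = 1 → (ts.get u.1).get u.2 = true := by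
    intro u h1
    have : u.2 = ⟨0, by omega⟩ := Fin.ext (by have := u.2.isLt; omega)
    rw [this]
    exact hget0 u.1 (by omega)
  have Wdisj : ∀ u v, u ≠ v → Disjoint (W u) (W v) := by
    intro u v huv
    have hvne : (⟨u.1, Sum.inl u.2⟩ : Σ i : Fin ts.length, CatV (ts.get i))
        ≠ ⟨v.1, Sum.inl v.2⟩ := by
      intro hcontra
      exact huv (by
        have := sigma_spine_inj hcontra
        exact (by rw [← Sigma.eta u, ← Sigma.eta v] at this ⊢; exact this))
    rw [Finset.disjoint_left]
    intro p hpu hpv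
    rw [memW] at hpu hpv
    rcases hpu with h1 | ⟨h1, hp1, hm1⟩ <;> rcases hpv with h2 | ⟨h2, hp2, hm2⟩
    · exact Set.disjoint_left.mp (hdisjB _ _ hvne) h1 h2
    · obtain ⟨p', hp', hsing, hmem, hnb, hlen1⟩ := nospine v.1 v.2 h2
      have hpp' : p = p' := by
        have := hsing _ hm2
        have h3 := Sum.inr.inj this
        exact congrArg Subtype.val h3
      have h0 : (ts.get v.1).get v.2 = true := hairpos v hlen1
      have hin := hnb _ (union_adj_spine_hair v.1 v.2 h0)
      rw [← hpp'] at hin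
      exact Set.disjoint_left.mp (hdisjB _ _ (sigma_spine_ne_hair u.2 ⟨v.2, h0⟩)) h1 hin
    · obtain ⟨p', hp', hsing, hmem, hnb, hlen1⟩ := nospine u.1 u.2 h1
      have hpp' : p = p' := by
        have := hsing _ hm1
        have h3 := Sum.inr.inj this
        exact congrArg Subtype.val h3
      have h0 : (ts.get u.1).get u.2 = true := hairpos u hlen1
      have hin := hnb _ (union_adj_spine_hair u.1 u.2 h0)
      rw [← hpp'] at hin
      exact Set.disjoint_left.mp (hdisjB _ _ (sigma_spine_ne_hair v.2 ⟨u.2, h0⟩)) h2 hin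
    · exact Set.disjoint_left.mp (hdisjB _ _ hvne) hm1 hm2
  -- counting
  have cardT : Fintype.card (Σ i : Fin ts.length, Fin (ts.get i).length) = s.length := by
    rw [Fintype.card_sigma]
    simp only [Fintype.card_fin]
    rw [← hlen]
    simp only [List.get_eq_getElem]
    exact Fin.sum_univ_fun_getElem ts List.length
  have hdisj'' : ∀ x ∈ Finset.univ, ∀ y ∈ Finset.univ, x ≠ y → Disjoint (W x) (W y) :=
    fun x _ y _ h => Wdisj x y h
  have hbiu := (Finset.card_biUnion hdisj'').symm
  have hle : ∑ u, (W u).card ≤ s.length := by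
    rw [hbiu]
    calc (Finset.univ.biUnion W).card ≤ Fintype.card (Fin s.length) :=
          Finset.card_le_univ _
      _ = s.length := Fintype.card_fin _
  have hge : s.length ≤ ∑ u, (W u).card := by
    calc s.length = Fintype.card (Σ i : Fin ts.length, Fin (ts.get i).length) := cardT.symm
      _ = ∑ u : (Σ i : Fin ts.length, Fin (ts.get i).length), 1 := by
          rw [← Finset.card_univ, Finset.card_eq_sum_ones]
      _ ≤ ∑ u, (W u).card :=
          Finset.sum_le_sum (fun u _ => Nat.one_le_iff_ne_zero.mpr
            (by simpa [Finset.card_eq_zero, ← Finset.not_nonempty_iff_eq_empty] using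
              (by simp [Finset.card_pos.mpr (Wne u)] : 0 < (W u).card).ne'))
  have hsum : ∑ u, (W u).card = s.length := le_antisymm hle hge
  have hcard1 : ∀ u, (W u).card = 1 := by
    by_contra hc
    push_neg at hc
    obtain ⟨u0, hu0⟩ := hc
    have h2 : 2 ≤ (W u0).card := by
      have := Finset.card_pos.mpr (Wne u0)
      omega
    have hlt : ∑ u : (Σ i : Fin ts.length, Fin (ts.get i).length), 1 < ∑ u, (W u).card :=
      Finset.sum_lt_sum (fun u _ => Finset.card_pos.mpr (Wne u))
        ⟨u0, Finset.mem_univ _, by omega⟩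
    rw [hsum] at hlt
    have : ∑ u : (Σ i : Fin ts.length, Fin (ts.get i).length), 1
        = Fintype.card (Σ i : Fin ts.length, Fin (ts.get i).length) := by
      rw [← Finset.card_univ, Finset.card_eq_sum_ones]
    rw [this, cardT] at hlt
    omega
  have hcover : ∀ p : Fin s.length, ∃ u, p ∈ W u := by
    by_contra hc
    push_neg at hc
    obtain ⟨p, hp⟩ := hc
    have hsub : Finset.univ.biUnion W ⊆ Finset.univ.erase p := by
      intro x hx
      rw [Finset.mem_biUnion] at hx
      obtain ⟨u, -, hxu⟩ := hx
      rw [Finset.mem_erase]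
      refine ⟨?_, Finset.mem_univ _⟩
      intro hxp
      subst hxp
      exact hp u hxu
    have hcc := Finset.card_le_card hsub
    rw [← hbiu, hsum] at hcc
    rw [Finset.card_erase_of_mem (Finset.mem_univ _), Finset.card_univ, Fintype.card_fin] at hcc
    have := p.isLt
    omega
  have hWsing : ∀ u, ∃ a, W u = {a} := fun u => Finset.card_eq_one.mp (hcard1 u)
  choose π hπ using hWsing
  have πmem : ∀ u, π u ∈ W u := fun u => by rw [hπ u]; exact Finset.mem_singleton_self _
  have πeq : ∀ u p, p ∈ W u → p = π u := fun u p hp => by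
    rw [hπ u] at hp; exact Finset.mem_singleton.mp hp
  have πinj : ∀ u v, π u = π v → u = v := by
    intro u v h
    by_contra hne'
    exact Finset.disjoint_left.mp (Wdisj u v hne') (πmem u) (h ▸ πmem v)
  -- POS
  have hposf : ∀ (u : Σ i : Fin ts.length, Fin (ts.get i).length) (x : CatV s),
      x ∈ B ⟨u.1, Sum.inl u.2⟩ → posOf x = π u := by
    intro u x hx
    by_cases hsp : ∃ q : Fin s.length, Sum.inl q ∈ B ⟨u.1, Sum.inl u.2⟩
    · obtain ⟨q, hq⟩ := hsp
      cases x with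
      | inl p =>
        exact πeq u p ((memW u p).mpr (Or.inl hx))
      | inr hh =>
        have hx2 : Sum.inl hh.1 ∈ B ⟨u.1, Sum.inl u.2⟩ :=
          hair_anchor (hconn _) hx hq (by simp)
        exact πeq u hh.1 ((memW u hh.1).mpr (Or.inl hx2))
    · push_neg at hsp
      obtain ⟨p, hp, hsing, hmem, -, -⟩ := nospine u.1 u.2 hsp
      have hxe := hsing x hx
      have hpπ : p = π u := πeq u p ((memW u p).mpr (Or.inr ⟨hsp, hp, hmem⟩))
      rw [hxe]
      exact hpπ
  -- location of spine vertices of C(s)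
  have spine_loc : ∀ q : Fin s.length, ∃ u' : Σ i : Fin ts.length, Fin (ts.get i).length,
      (Sum.inl q ∈ B ⟨u'.1, Sum.inl u'.2⟩) ∨
      ((∀ r : Fin s.length, Sum.inl r ∉ B ⟨u'.1, Sum.inl u'.2⟩) ∧
        ∃ hj' : (ts.get u'.1).get u'.2 = true,
          Sum.inl q ∈ B ⟨u'.1, Sum.inr ⟨u'.2, hj'⟩⟩) := by
    intro q
    obtain ⟨u, hu⟩ := hcover q
    rw [memW] at hu
    rcases hu with h | ⟨h, hp, hmem⟩
    · exact ⟨u, Or.inl h⟩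
    · obtain ⟨p', hp', hsing, hmem', hnb, hlen1⟩ := nospine u.1 u.2 h
      have hq : q = p' := congrArg Subtype.val (Sum.inr.inj (hsing _ hmem))
      have h0 : (ts.get u.1).get u.2 = true := hairpos u hlen1
      refine ⟨u, Or.inr ⟨h, h0, ?_⟩⟩
      have := hnb _ (union_adj_spine_hair u.1 u.2 h0)
      rw [← hq] at this
      exact this
  -- hair constraint
  have hairA : ∀ (u : Σ i : Fin ts.length, Fin (ts.get i).length)
      (hj : (ts.get u.1).get u.2 = true), s.get (π u) = true := by
    intro u hj
    by_cases hsp : ∃ q : Fin s.length, Sum.inl q ∈ B ⟨u.1, Sum.inl u.2⟩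
    · have hno : ∀ q : Fin s.length, Sum.inl q ∉ B ⟨u.1, Sum.inr ⟨u.2, hj⟩⟩ := by
        intro q hqBh
        obtain ⟨u', hu'⟩ := spine_loc q
        rcases hu' with h' | ⟨h', hj', hmem'⟩
        · exact Set.disjoint_left.mp
            (hdisjB _ _ (sigma_spine_ne_hair u'.2 ⟨u.2, hj⟩)) h' hqBh
        · by_cases he : u' = u
          · subst he
            obtain ⟨q0, hq0⟩ := hsp
            exact h' q0 hq0
          · have hvne : (⟨u'.1, Sum.inr ⟨u'.2, hj'⟩⟩ : Σ i : Fin ts.length, CatV (ts.get i))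
                ≠ ⟨u.1, Sum.inr ⟨u.2, hj⟩⟩ := by
              intro hcontra
              apply he
              have := sigma_hair_inj hcontra
              rw [← Sigma.eta u', ← Sigma.eta u] at this ⊢
              exact this
            exact Set.disjoint_left.mp (hdisjB _ _ hvne) hmem' hqBh
      have hhair : ∀ y ∈ B ⟨u.1, Sum.inr ⟨u.2, hj⟩⟩, ∃ h, y = Sum.inr h := by
        intro y hy
        cases y with
        | inl q => exact absurd hy (hno q)
        | inr hh => exact ⟨hh, rfl⟩
      obtain ⟨x', hx', y', hy', hxy⟩ := hedge _ _ (union_adj_spine_hair u.1 u.2 hj)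
      obtain ⟨h0, rfl⟩ := hhair y' hy'
      have hx'e := adj_hair hxy
      have hppos := hposf u x' hx'
      rw [hx'e] at hppos
      have : h0.1 = π u := hppos
      rw [← this]
      exact h0.2
    · push_neg at hsp
      obtain ⟨p, hp, hsing, hmem, -, -⟩ := nospine u.1 u.2 hsp
      have hpπ : p = π u := πeq u p ((memW u p).mpr (Or.inr ⟨hsp, hp, hmem⟩))
      rw [← hpπ]
      exact hp
  -- consecutive spine positions
  have hstep : ∀ (i : Fin ts.length) (j j' : Fin (ts.get i).length), j.val + 1 = j'.val →
      (π ⟨i, j⟩).val + 1 = (π ⟨i, j'⟩).val ∨ (π ⟨i, j'⟩).val + 1 = (π ⟨i, j⟩).val := by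
    intro i j j' hjj
    obtain ⟨x, hx, y, hy, hxy⟩ := hedge _ _ (union_adj_spine_spine i hjj)
    have hxπ := hposf ⟨i, j⟩ x hx
    have hyπ := hposf ⟨i, j'⟩ y hy
    have hπne : (π ⟨i, j⟩).val ≠ (π ⟨i, j'⟩).val := by
      intro hc
      have h5 := πinj _ _ (Fin.ext hc)
      have := sigma_T_inj h5
      rw [Fin.ext_iff] at this
      omega
    rcases (SimpleGraph.fromRel_adj _ _ _).mp hxy with ⟨-, hr | hr⟩
    · cases x with
      | inl p =>
        cases y with
        | inl q =>
          have hr' : p.val + 1 = q.val := hr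
          have e1 : p = π ⟨i, j⟩ := hxπ
          have e2 : q = π ⟨i, j'⟩ := hyπ
          left
          rw [← e1, ← e2]
          exact hr'
        | inr hh =>
          exfalso
          have hr' : p.val = hh.1.val := hr
          have e1 : p = π ⟨i, j⟩ := hxπ
          have e2 : hh.1 = π ⟨i, j'⟩ := hyπ
          apply hπne
          rw [← e1, ← e2]
          exact hr'
      | inr hh => exact hr.elim
    · cases y with
      | inl q =>
        cases x with
        | inl p =>
          have hr' : q.val + 1 = p.val := hr
          have e1 : p = π ⟨i, j⟩ := hxπ
          have e2 : q = π ⟨i, j'⟩ := hyπ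
          right
          rw [← e1, ← e2]
          exact hr'
        | inr hh =>
          exfalso
          have hr' : q.val = hh.1.val := hr
          have e1 : hh.1 = π ⟨i, j⟩ := hxπ
          have e2 : q = π ⟨i, j'⟩ := hyπ
          apply hπne
          rw [← e1, ← e2]
          exact hr'.symm
      | inr hh => exact hr.elim
  -- per-component analysis
  have hcomp : ∀ i : Fin ts.length, ∃ α : ℕ,
      (∀ j, j < (ts.get i).length →
        ((ts.get i).getD j false = true → s.getD (α + j) false = true)) ∧
      (∀ p : ℕ, (∃ j, j < (ts.get i).length ∧ p = α + j) ↔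
        (∃ j : Fin (ts.get i).length, p = (π ⟨i, j⟩).val)) := by
    intro i
    have hk1 : 0 < (ts.get i).length := hpos i
    set k := (ts.get i).length with hk
    set f : ℕ → ℕ := fun j => if h : j < k then (π ⟨i, ⟨j, h⟩⟩).val else 0 with hf
    have hfeq : ∀ (j : ℕ) (hj : j < k), f j = (π ⟨i, ⟨j, hj⟩⟩).val := by
      intro j hj; simp only [hf, dif_pos hj]
    have hinj : ∀ a, a < k → ∀ b, b < k → f a = f b → a = b := by
      intro a ha b hb hab
      rw [hfeq a ha, hfeq b hb] at hab
      have h5 := πinj _ _ (Fin.ext hab)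
      have := sigma_T_inj h5
      rw [Fin.ext_iff] at this
      exact this
    have hst : ∀ j, j + 1 < k → f (j + 1) = f j + 1 ∨ f j = f (j + 1) + 1 := by
      intro j hj
      rw [hfeq (j+1) hj, hfeq j (by omega)]
      rcases hstep i ⟨j, by omega⟩ ⟨j+1, hj⟩ rfl with h | h
      · left; omega
      · right; omega
    have sgetD : ∀ (u : Σ i : Fin ts.length, Fin (ts.get i).length),
        s.get (π u) = true → s.getD (π u).val false = true := by
      intro u hu
      rw [List.getD_eq_getElem _ _ (π u).isLt, ← List.get_eq_getElem]
      exact hu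
    rcases chain_mono k f hinj hst with hup | hdn
    · refine ⟨f 0, ?_, ?_⟩
      · intro j hj ht
        have hjt : (ts.get i).get ⟨j, hj⟩ = true := by
          rw [List.getD_eq_getElem _ _ hj] at ht
          rw [List.get_eq_getElem]
          exact ht
        have hA := sgetD _ (hairA ⟨i, ⟨j, hj⟩⟩ hjt)
        have hval : (π ⟨i, ⟨j, hj⟩⟩).val = f 0 + j := by
          rw [← hfeq j hj]; exact hup j hj
        rw [← hval]
        exact hA
      · intro p
        constructor
        · rintro ⟨j, hj, rfl⟩
          refine ⟨⟨j, hj⟩, ?_⟩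
          rw [← hfeq j hj]
          exact (hup j hj).symm
        · rintro ⟨j, rfl⟩
          refine ⟨j.val, j.isLt, ?_⟩
          rw [← hfeq j.val j.isLt]
          exact hup j.val j.isLt
    · have hoffs : ∀ j, j < k → f j = f (k-1) + (k-1-j) := by
        intro j hj
        have h1 := hdn j hj
        have h2 := hdn (k-1) (by omega)
        omega
      refine ⟨f (k-1), ?_, ?_⟩
      · intro j hj ht
        have hpal' := hpal (ts.get i) (hmemts i)
        have hrev := List.getElem_reverse (l := ts.get i) (i := j)
          (by rw [List.length_reverse]; omega)
        rw [List.getD_eq_getElem _ _ hj] at ht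
        simp only [hpal'] at hrev
        have hjt : (ts.get i).get ⟨k-1-j, by omega⟩ = true := by
          rw [List.get_eq_getElem]
          rw [← hrev]
          exact ht
        have hA := sgetD _ (hairA ⟨i, ⟨k-1-j, by omega⟩⟩ hjt)
        have hval : (π ⟨i, ⟨k-1-j, by omega⟩⟩).val = f (k-1) + j := by
          rw [← hfeq (k-1-j) (by omega)]
          have := hoffs (k-1-j) (by omega)
          omega
        rw [← hval]
        exact hA
      · intro p
        constructor
        · rintro ⟨j, hj, rfl⟩
          refine ⟨⟨k-1-j, by omega⟩, ?_⟩
          rw [← hfeq (k-1-j) (by omega)]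
          have := hoffs (k-1-j) (by omega)
          omega
        · rintro ⟨j, rfl⟩
          refine ⟨k-1-j.val, by omega, ?_⟩
          rw [← hfeq j.val j.isLt]
          have := hoffs j.val j.isLt
          omega
  choose α hα using hcomp
  apply assemble ts.length ts s α rfl hlen (fun i => hpos i)
  · -- covering
    intro p hp
    obtain ⟨u, hu⟩ := hcover ⟨p, hp⟩
    have h1 : (⟨p, hp⟩ : Fin s.length) = π u := πeq u _ hu
    have h2 : ∃ j : Fin (ts.get u.1).length, p = (π ⟨u.1, j⟩).val := by
      refine ⟨u.2, ?_⟩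
      rw [Sigma.eta]
      rw [← h1]
    obtain ⟨j, hj, hpj⟩ := ((hα u.1).2 p).mpr h2
    exact ⟨u.1, by omega, by omega⟩
  · -- disjointness
    rintro i i' hii' p hle hlt ⟨hle2, hlt2⟩
    obtain ⟨j, hpj⟩ := ((hα i).2 p).mp ⟨p - α i, by omega, by omega⟩
    obtain ⟨j', hpj'⟩ := ((hα i').2 p).mp ⟨p - α i', by omega, by omega⟩
    have : π ⟨i, j⟩ = π ⟨i', j'⟩ := Fin.ext (by omega)
    have h5 := πinj _ _ this
    rw [Sigma.ext_iff] at h5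
    exact hii' h5.1
  · -- condition
    exact fun i => (hα i).1


end SCAux

/-- If each `t_i` is a palindrome starting and ending with a `1`, then the disjoint union of
the caterpillars `C(t_1),…,C(t_n)` is a minor of `C(s)` iff the String Crafting instance
`(s; t_1,…,t_n)` has a solution, equivalently iff the disjoint union is isomorphic to a
subgraph of `C(s)`. -/
theorem catUnion_minor_iff_stringCrafting (s : List Bool) (ts : List (List Bool))
    (hlen : (ts.map List.length).sum = s.length)
    (hpal : ∀ t ∈ ts, t.reverse = t)
    (hhead : ∀ t ∈ ts, t.head? = some true)
    (hlast : ∀ t ∈ ts, t.getLast? = some true) :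
    (IsMinorOf (CatUnion ts) (Cat s) ↔ SCSol s ts) ∧
    (IsMinorOf (CatUnion ts) (Cat s) ↔ IsSubgraphOf (CatUnion ts) (Cat s)) := by
  have h1 : IsMinorOf (CatUnion ts) (Cat s) → SCSol s ts :=
    fun hm => SCAux.sol_of_minor s ts hlen hpal hhead hlast hm
  have h2 : SCSol s ts → IsSubgraphOf (CatUnion ts) (Cat s) :=
    fun hs => SCAux.sub_of_sol s ts hlen hs
  have h3 : IsSubgraphOf (CatUnion ts) (Cat s) → IsMinorOf (CatUnion ts) (Cat s) :=
    SCAux.minor_of_sub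
  exact ⟨⟨h1, fun hs => h3 (h2 hs)⟩, ⟨fun hm => h2 (h1 hm), h3⟩⟩
end
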